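/- arXiv:2303.05336 — 9 statements merged into one kernel-verified Lean document; each statement's English description precedes it below -/
import Mathlib

section
/- Let S be a string such that some suffix of S matches in a semi-repeat-free elastic founder graph G spanning at least three blocks, with the rightmost matched block being V^r, and suppose suffix Q = S[|S|-j+1..|S|] matches a prefix of ℓ(v)ℓ(w) for some v in V^{r-1} and w in V^r. Then Q can occur as a substring of ℓ(v')ℓ(w') for v' in V^{r-1}, w' in V^r only as a prefix (i.e., starting at position 1). -/
/-- An elastic founder graph: vertices partitioned into blocks `Fin b`,
edges only between consecutive blocks, nonempty string labels,
distinct labels within a block. -/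
structure EFG (α : Type) where
  V : Type
  b : ℕ
  blk : V → Fin b
  E : V → V → Prop
  label : V → List α
  label_ne : ∀ v, label v ≠ []
  edge_blk : ∀ v w, E v w → (blk w : ℕ) = (blk v : ℕ) + 1
  label_inj : ∀ v w, blk v = blk w → label v = label w → v = w

namespace EFG
variable {α : Type} (G : EFG α)

/-- A path is a nonempty sequence of vertices connected by edges. -/
def IsPath (p : List G.V) : Prop := p ≠ [] ∧ p.Chain' G.E

/-- The label of a path: the concatenation of the labels of its nodes. -/
def pathLabel (p : List G.V) : List α := (p.map G.label).flatten

/-- The position in `pathLabel p` at which the label of the `j`-th node starts. -/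
def startPos (p : List G.V) (j : ℕ) : ℕ := (G.pathLabel (p.take j)).length

/-- `G` is semi-repeat-free: every node label `ℓ(v)` occurs in the label of a
path only as a prefix of the sub-path starting at a node in the same block as `v`. -/
def SemiRepeatFree : Prop :=
  ∀ v : G.V, ∀ p : List G.V, G.IsPath p → ∀ i : ℕ,
    G.label v <+: (G.pathLabel p).drop i →
    ∃ j, ∃ h : j < p.length, i = G.startPos p j ∧ G.blk (p.get ⟨j, h⟩) = G.blk v

end EFG

/-- Lemma blocksync: if some suffix of `Q` matches in the
semi-repeat-free EFG `G` spanning at least three blocks, and the suffix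
`S = Q.drop j` matches a prefix of `ℓ(v)ℓ(w)` for an edge `(v,w)` with `v ∈ V^{r-1}`,
`w ∈ V^r` (i.e. it spans into the second node), then `S` can appear in any
`ℓ(v')ℓ(w')` with `v'` in block `V^{r-1}` and `(v',w') ∈ E` only as a prefix. -/
theorem blocksync {α : Type} (G : EFG α) (hsrf : G.SemiRepeatFree)
    (Q : List α) (j : ℕ)
    (hthree : ∃ (j' i' : ℕ) (P : List G.V), G.IsPath P ∧ 3 ≤ P.length ∧
      Q.drop j' <+: (G.pathLabel P).drop i')
    (v w : G.V) (hvw : G.E v w)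
    (hS : Q.drop j <+: G.label v ++ G.label w)
    (hspan : (G.label v).length < (Q.drop j).length)
    (v' w' : G.V) (hvw' : G.E v' w') (hblk : G.blk v' = G.blk v)
    (i : ℕ) (hocc : Q.drop j <+: (G.label v' ++ G.label w').drop i) :
    i = 0 := by
  -- ℓ(v) is a prefix of S = Q.drop j
  have hv_pref : G.label v <+: Q.drop j :=
    List.prefix_of_prefix_length_le (List.prefix_append _ _) hS hspan.le
  -- hence ℓ(v) occurs at position i in pathLabel [v', w']
  have hp : G.IsPath [v', w'] := ⟨by simp, List.isChain_pair.mpr hvw'⟩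
  have hpl : G.pathLabel [v', w'] = G.label v' ++ G.label w' := by
    simp [EFG.pathLabel]
  have hocc' : G.label v <+: (G.pathLabel [v', w']).drop i := by
    rw [hpl]; exact hv_pref.trans hocc
  obtain ⟨k, hk, hi, hblk'⟩ := hsrf v [v', w'] hp i hocc'
  match k, hk, hi, hblk' with
  | 0, hk, hi, hblk' => simpa [EFG.startPos, EFG.pathLabel] using hi
  | 1, hk, hi, hblk' =>
    exfalso
    have h1 : (G.blk w' : ℕ) = (G.blk v' : ℕ) + 1 := G.edge_blk v' w' hvw'
    have h2 : G.blk w' = G.blk v := by simpa using hblk'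
    rw [h2, hblk] at h1
    omega
  | (n+2), hk, _, _ => simp at hk
end

section
/- Suppose G = (V,E,ℓ) is a semi-repeat-free elastic founder graph and v_1, v_2, w_2 ∈ V are nodes such that (v_1, w_2) ∈ E, v_2 is in the same block as w_2, and ℓ(v_2) is a prefix of ℓ(w_2). Then there is no path W = u_1⋯u_t of G with u_1 ≠ v_1 such that ℓ(v_1)ℓ(v_2) is a prefix of ℓ(u_1)⋯ℓ(u_t). -/
lemma EFG.blk_get_aux {α : Type} (G : EFG α) (p : List G.V) (hc : p.Chain' G.E)
    (j : ℕ) (hj : j < p.length) (h0 : 0 < p.length) :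
    (G.blk (p.get ⟨j, hj⟩) : ℕ) = G.blk (p.get ⟨0, h0⟩) + j := by
  induction j with
  | zero => simp
  | succ k ih =>
    have hk : k < p.length := Nat.lt_of_succ_lt hj
    have he : G.E (p.get ⟨k, hk⟩) (p.get ⟨k + 1, hj⟩) :=
      List.isChain_iff_getElem.mp hc k (by omega)
    have := G.edge_blk _ _ he
    rw [this, ih hk, Nat.add_assoc]

/-- if `(v₁,w₂) ∈ E`, `v₂` is in the same block as `w₂` and
`ℓ(v₂) ⪯ ℓ(w₂)`, then no path `W = u₁⋯u_t` with `u₁ ≠ v₁` satisfies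
`ℓ(v₁)ℓ(v₂) ⪯ ℓ(u₁)⋯ℓ(u_t)`. -/
theorem no_other_path_with_prefix {α : Type} (G : EFG α)
    (hsrf : G.SemiRepeatFree) (v₁ v₂ w₂ : G.V) (hvw : G.E v₁ w₂)
    (hblk : G.blk v₂ = G.blk w₂) (hpre : G.label v₂ <+: G.label w₂) :
    ¬ ∃ p : List G.V, G.IsPath p ∧ p.head? ≠ some v₁ ∧
      G.label v₁ ++ G.label v₂ <+: G.pathLabel p := by
  rintro ⟨p, hp, hhead, hpref⟩
  obtain ⟨hne, hc⟩ := hp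
  have hlen : 0 < p.length := List.length_pos_iff.mpr hne
  -- ℓ(v₁) is a prefix of pathLabel p
  have hpre1 : G.label v₁ <+: (G.pathLabel p).drop 0 := by
    rw [List.drop_zero]
    exact ((G.label v₁).prefix_append (G.label v₂)).trans hpref
  obtain ⟨j₀, hj₀, hstart₀, hblk₀⟩ := hsrf v₁ p ⟨hne, hc⟩ 0 hpre1
  -- j₀ = 0 since startPos is 0 only there
  have hj₀0 : j₀ = 0 := by
    by_contra h
    obtain ⟨k, rfl⟩ := Nat.exists_eq_succ_of_ne_zero h
    have h1 : 1 ≤ p.length := hlen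
    obtain ⟨a, t, ha⟩ := List.exists_cons_of_ne_nil hne
    have : 0 < (G.pathLabel (p.take (k + 1))).length := by
      subst ha
      simp [EFG.pathLabel, List.take_succ_cons]
      exact Or.inl (List.length_pos_iff.mpr (G.label_ne a))
    rw [EFG.startPos] at hstart₀
    simp only [Nat.succ_eq_add_one] at hstart₀
    omega
  subst hj₀0
  -- ℓ(v₂) is a prefix of (pathLabel p).drop |ℓ(v₁)|
  obtain ⟨s, hs⟩ := hpref
  have hpre2 : G.label v₂ <+: (G.pathLabel p).drop (G.label v₁).length := by
    rw [← hs, List.append_assoc, List.drop_left]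
    exact (G.label v₂).prefix_append s
  obtain ⟨j₁, hj₁, hstart₁, hblk₁⟩ := hsrf v₂ p ⟨hne, hc⟩ (G.label v₁).length hpre2
  -- block arithmetic: j₁ = 1
  have hb0 : (G.blk (p.get ⟨0, hlen⟩) : ℕ) = G.blk v₁ := by rw [hblk₀]
  have hb1 : (G.blk (p.get ⟨j₁, hj₁⟩) : ℕ) = (G.blk v₁ : ℕ) + 1 := by
    rw [hblk₁, hblk, ← G.edge_blk _ _ hvw]
  have haux := G.blk_get_aux p hc j₁ hj₁ hlen
  have hj₁1 : j₁ = 1 := by omega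
  subst hj₁1
  -- startPos p 1 = |ℓ(p₀)| = |ℓ(v₁)|
  obtain ⟨a, t, rfl⟩ := List.exists_cons_of_ne_nil hne
  have hsp : G.startPos (a :: t) 1 = (G.label a).length := by
    simp [EFG.startPos, EFG.pathLabel]
  rw [hsp] at hstart₁
  -- ℓ(a) and ℓ(v₁) are both prefixes of pathLabel, same length ⟹ equal
  have hpa : G.label a <+: G.pathLabel (a :: t) := by
    rw [show G.pathLabel (a :: t) = G.label a ++ G.pathLabel t from by
      simp [EFG.pathLabel]]
    exact List.prefix_append _ _
  have heq : G.label a = G.label v₁ := by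
    have h1 := hpre1
    rw [List.drop_zero] at h1
    have := List.prefix_of_prefix_length_le hpa h1 (le_of_eq hstart₁.symm)
    exact this.eq_of_length hstart₁.symm
  have hba : G.blk a = G.blk v₁ := by
    have : (⟨0, hlen⟩ : Fin (a :: t).length).val = 0 := rfl
    simpa using hblk₀
  have : a = v₁ := G.label_inj a v₁ hba heq
  exact hhead (by simp [this])
end

section
/- A segmentation S of a multiple sequence alignment induces a semi-repeat-free elastic founder graph G(S) if and only if all segments of S are semi-repeat-free; that is, G(S) is semi-repeat-free if and only if for every segment [x..y] of S and all rows i, i', the string spell(MSA[i][x..y]) occurs in the gaps-removed row spell(MSA[i'][1..n]) only at position g(i', x), where g(i', x) is x minus the number of gaps in MSA[i'][1..x]. -/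
/-- The gaps-removed string spelled by row `i` of the MSA in columns `x..y`
(0-indexed, inclusive). `none` entries are the gap symbol `-`. -/
def spell {α : Type} {m n : ℕ} (M : Fin m → Fin n → Option α) (i : Fin m) (x y : ℕ) : List α :=
  (List.finRange n).filterMap (fun (c : Fin n) => if x ≤ (c : ℕ) ∧ (c : ℕ) ≤ y then M i c else none)

/-- The gaps-removed row `i` of the MSA. -/
def row {α : Type} {m n : ℕ} (M : Fin m → Fin n → Option α) (i : Fin m) : List α :=
  (List.finRange n).filterMap (M i)

/-- `g(i,x)`: the number of non-gap symbols of row `i` strictly before column `x`,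
i.e. the position in the gaps-removed row `i` corresponding to column `x`. -/
def gOff {α : Type} {m n : ℕ} (M : Fin m → Fin n → Option α) (i : Fin m) (x : ℕ) : ℕ :=
  ((List.finRange n).filterMap (fun (c : Fin n) => if (c : ℕ) < x then M i c else none)).length

/-- Row substring `MSA[i][x..y]` is semi-repeat-free: `spell(MSA[i][x..y])` occurs
in each gaps-removed row `i'` only at position `g(i',x)`. -/
def RowSRF {α : Type} {m n : ℕ} (M : Fin m → Fin n → Option α) (x y : ℕ) (i : Fin m) : Prop :=
  ∀ (i' : Fin m) (p : ℕ), spell M i x y <+: (row M i').drop p → p = gOff M i' x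

/-- The segment `[x..y]` of the MSA is semi-repeat-free. -/
def SegSRF {α : Type} {m n : ℕ} (M : Fin m → Fin n → Option α) (x y : ℕ) : Prop :=
  ∀ (i i' : Fin m) (p : ℕ), spell M i x y <+: (row M i').drop p → p = gOff M i' x

/-- The elastic founder graph induced by a segmentation `seg : Fin b → ℕ × ℕ`
(each `seg k = (x_k, y_k)` a column interval) of the MSA `M`: one node per
distinct spelled string of each block, edges between consecutive blocks given
by rows spelling both labels. -/
def inducedEFG {α : Type} {m n b : ℕ} (M : Fin m → Fin n → Option α)
    (seg : Fin b → ℕ × ℕ)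
    (hne : ∀ (k : Fin b) (i : Fin m), spell M i (seg k).1 (seg k).2 ≠ []) : EFG α where
  V := Σ k : Fin b, {s : List α // ∃ i : Fin m, s = spell M i (seg k).1 (seg k).2}
  b := b
  blk := fun v => v.1
  E := fun v w => ((w.1 : ℕ) = (v.1 : ℕ) + 1) ∧
        ∃ i : Fin m, v.2.1 = spell M i (seg v.1).1 (seg v.1).2 ∧
                     w.2.1 = spell M i (seg w.1).1 (seg w.1).2
  label := fun v => v.2.1
  label_ne := fun v => by obtain ⟨i, hi⟩ := v.2.2; simpa [hi] using hne _ i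
  edge_blk := fun v w h => h.1
  label_inj := by
    rintro ⟨k, s, hs⟩ ⟨k', s', hs'⟩ hb hl
    obtain rfl : k = k' := hb
    obtain rfl : s = s' := hl
    rfl

namespace SRFHelp
variable {α : Type} {m n : ℕ} (M : Fin m → Fin n → Option α)

lemma splitCore (f : Fin n → Option α) (t : ℕ) :
    (List.finRange n).filterMap f =
      (List.finRange n).filterMap (fun (c : Fin n) => if (c : ℕ) < t then f c else none) ++
      (List.finRange n).filterMap (fun (c : Fin n) => if t ≤ (c : ℕ) then f c else none) := by
  have htake : ∀ c ∈ (List.finRange n).take t, (c : ℕ) < t := by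
    intro c hc
    rw [List.mem_iff_getElem] at hc
    obtain ⟨j, hj, rfl⟩ := hc
    have hj' : j < t := lt_of_lt_of_le hj (by simp [List.length_take])
    simp [List.getElem_take, List.getElem_finRange]
    omega
  have hdrop : ∀ c ∈ (List.finRange n).drop t, t ≤ (c : ℕ) := by
    intro c hc
    rw [List.mem_iff_getElem] at hc
    obtain ⟨j, hj, rfl⟩ := hc
    simp [List.getElem_drop, List.getElem_finRange]
  conv_lhs => rw [← List.take_append_drop t (List.finRange n)]
  conv_rhs => rw [← List.take_append_drop t (List.finRange n)]
  rw [List.filterMap_append, List.filterMap_append, List.filterMap_append]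
  have e1 : (List.filterMap (fun (c : Fin n) => if (c : ℕ) < t then f c else none) ((List.finRange n).take t))
      = List.filterMap f ((List.finRange n).take t) :=
    List.filterMap_congr (fun c hc => by simp [htake c hc])
  have e2 : (List.filterMap (fun (c : Fin n) => if (c : ℕ) < t then f c else none) ((List.finRange n).drop t))
      = [] := by
    rw [List.filterMap_congr (g := fun (_ : Fin n) => none) (fun c hc => by simp [Nat.not_lt.2 (hdrop c hc)])]
    simp
  have e3 : (List.filterMap (fun (c : Fin n) => if t ≤ (c : ℕ) then f c else none) ((List.finRange n).take t))
      = [] := by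
    rw [List.filterMap_congr (g := fun (_ : Fin n) => none) (fun c hc => by simp [Nat.not_le.2 (htake c hc)])]
    simp
  have e4 : (List.filterMap (fun (c : Fin n) => if t ≤ (c : ℕ) then f c else none) ((List.finRange n).drop t))
      = List.filterMap f ((List.finRange n).drop t) :=
    List.filterMap_congr (fun c hc => by simp [hdrop c hc])
  rw [e1, e2, e3, e4]
  simp

/-- prefix columns `< t` -/
def colP (i : Fin m) (t : ℕ) : List α :=
  (List.finRange n).filterMap (fun (c : Fin n) => if (c : ℕ) < t then M i c else none)

/-- suffix columns `≥ t` -/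
def colQ (i : Fin m) (t : ℕ) : List α :=
  (List.finRange n).filterMap (fun (c : Fin n) => if t ≤ (c : ℕ) then M i c else none)

lemma row_eq (i : Fin m) (t : ℕ) : row M i = colP M i t ++ colQ M i t := splitCore (M i) t

lemma gOff_eq (i : Fin m) (t : ℕ) : gOff M i t = (colP M i t).length := rfl

lemma colP_zero (i : Fin m) : colP M i 0 = [] := by
  rw [colP, List.filterMap_congr (g := fun (_ : Fin n) => none) (fun c _ => by simp)]
  simp

lemma colQ_n (i : Fin m) : colQ M i n = [] := by
  rw [colQ, List.filterMap_congr (g := fun (_ : Fin n) => none) (fun c _ => by simp [Nat.not_le.2 c.isLt])]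
  simp

lemma colP_n (i : Fin m) : colP M i n = row M i := by
  rw [colP, List.filterMap_congr (g := M i) (fun c _ => by simp [c.isLt]), row]

lemma colQ_split (i : Fin m) {x y : ℕ} (h : x ≤ y + 1) :
    colQ M i x = spell M i x y ++ colQ M i (y + 1) := by
  rw [colQ, splitCore (fun (c : Fin n) => if x ≤ (c : ℕ) then M i c else none) (y + 1)]
  congr 1
  · exact List.filterMap_congr (fun c _ => by
      split_ifs <;> first | rfl | (exfalso; omega))
  · exact List.filterMap_congr (fun c _ => by
      split_ifs <;> first | rfl | (exfalso; omega))

lemma colP_split (i : Fin m) {x y : ℕ} (h : x ≤ y + 1) :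
    colP M i (y + 1) = colP M i x ++ spell M i x y := by
  rw [colP, splitCore (fun (c : Fin n) => if (c : ℕ) < y + 1 then M i c else none) x]
  congr 1
  · exact List.filterMap_congr (fun c _ => by
      split_ifs <;> first | rfl | (exfalso; omega))
  · exact List.filterMap_congr (fun c _ => by
      split_ifs <;> first | rfl | (exfalso; omega))

lemma gOff_add (i : Fin m) {x y : ℕ} (h : x ≤ y + 1) :
    gOff M i (y + 1) = gOff M i x + (spell M i x y).length := by
  rw [gOff_eq, gOff_eq, colP_split M i h]; simp

lemma gOff_mono (i : Fin m) {z t : ℕ} (h : z ≤ t) : gOff M i z ≤ gOff M i t := by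
  cases t with
  | zero => interval_cases z; omega
  | succ y => rw [gOff_add M i (x := z) (by omega)]; omega

lemma row_drop_gOff (i : Fin m) (t : ℕ) :
    (row M i).drop (gOff M i t) = colQ M i t := by
  rw [row_eq M i t, gOff_eq, List.drop_left]

lemma spell_prefix_row (i : Fin m) {x y : ℕ} (h : x ≤ y + 1) :
    spell M i x y <+: (row M i).drop (gOff M i x) := by
  rw [row_drop_gOff, colQ_split M i h]
  exact List.prefix_append _ _

end SRFHelp

namespace SRFHelp
variable {α : Type} {m n : ℕ} (M : Fin m → Fin n → Option α)

/- ## generic prefix lemmas -/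
lemma prefix_short {a c r : List α} (h : a <+: c ++ r) (hl : a.length ≤ c.length) : a <+: c := by
  have h1 := List.prefix_iff_eq_take.1 h
  rw [List.take_append, Nat.sub_eq_zero_of_le hl, List.take_zero,
    List.append_nil] at h1
  exact h1 ▸ List.take_prefix _ _

lemma prefix_mid {a c r : List α} (h : a <+: c ++ r) (hl : c.length ≤ a.length) : c <+: a := by
  have h1 := List.prefix_iff_eq_take.1 h
  have : a.take c.length = c := by
    rw [h1, List.take_take, min_eq_left hl, List.take_append,
      Nat.sub_self, List.take_zero, List.append_nil, List.take_length]
  exact this ▸ List.take_prefix _ _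

/- ## segment lemmas -/
variable {b : ℕ} {seg : Fin b → ℕ × ℕ}

lemma seg_gap (hord : ∀ k : Fin b, (seg k).1 ≤ (seg k).2)
    (hadj : ∀ (k : ℕ) (h : k + 1 < b),
      (seg ⟨k + 1, h⟩).1 = (seg ⟨k, Nat.lt_of_succ_lt h⟩).2 + 1) :
    ∀ (k k' : Fin b), (k : ℕ) < (k' : ℕ) → (seg k).2 + 1 ≤ (seg k').1 := by
  suffices H : ∀ (j : ℕ) (hj : j < b) (k : Fin b), (k : ℕ) < j → (seg k).2 + 1 ≤ (seg ⟨j, hj⟩).1 by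
    intro k k' hk; have := H k' k'.isLt k hk; simpa using this
  intro j
  induction j with
  | zero => omega
  | succ j ih =>
    intro hj k hk
    have hj' : j < b := Nat.lt_of_succ_lt hj
    rcases Nat.lt_or_ge (k : ℕ) j with h | h
    · have h1 := ih hj' k h
      have h2 := hord ⟨j, hj'⟩
      have h3 := hadj j hj
      omega
    · have hkj : (k : ℕ) = j := by omega
      have : k = ⟨j, hj'⟩ := Fin.ext hkj
      subst this
      have h3 := hadj j hj
      omega

lemma seg_x_mono (hord : ∀ k : Fin b, (seg k).1 ≤ (seg k).2)
    (hadj : ∀ (k : ℕ) (h : k + 1 < b),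
      (seg ⟨k + 1, h⟩).1 = (seg ⟨k, Nat.lt_of_succ_lt h⟩).2 + 1) :
    ∀ (k k' : Fin b), (k : ℕ) ≤ (k' : ℕ) → (seg k).1 ≤ (seg k').1 := by
  intro k k' hk
  rcases Nat.lt_or_ge (k : ℕ) (k' : ℕ) with h | h
  · have := seg_gap hord hadj k k' h
    have := hord k
    omega
  · have : k = k' := Fin.ext (by omega)
    subst this; omega

/-- Central uniqueness: if `spell M i? (seg k)` occurs in row `i0` at position
`gOff(i0, x_{k'}) + d` with `d < |spell M i0 (seg k')|`, then `k = k'` and `d = 0`. -/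
lemma uniq (hord : ∀ k : Fin b, (seg k).1 ≤ (seg k).2)
    (hadj : ∀ (k : ℕ) (h : k + 1 < b),
      (seg ⟨k + 1, h⟩).1 = (seg ⟨k, Nat.lt_of_succ_lt h⟩).2 + 1)
    (hne : ∀ (k : Fin b) (i : Fin m), spell M i (seg k).1 (seg k).2 ≠ [])
    (i0 : Fin m) (k k' : Fin b) (d : ℕ)
    (hd : d < (spell M i0 (seg k').1 (seg k').2).length)
    (heq : gOff M i0 (seg k').1 + d = gOff M i0 (seg k).1) :
    (k : ℕ) = (k' : ℕ) ∧ d = 0 := by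
  rcases lt_trichotomy (k : ℕ) (k' : ℕ) with h | h | h
  · exfalso
    have h1 : gOff M i0 ((seg k).2 + 1)
        = gOff M i0 (seg k).1 + (spell M i0 (seg k).1 (seg k).2).length :=
      gOff_add M i0 (by have := hord k; omega)
    have h2 : (spell M i0 (seg k).1 (seg k).2).length ≠ 0 := by
      simpa [List.length_eq_zero_iff] using hne k i0
    have h3 : (seg k).2 + 1 ≤ (seg k').1 := seg_gap hord hadj k k' h
    have h4 := gOff_mono M i0 h3
    omega
  · have : k = k' := Fin.ext h
    subst this
    omega
  · exfalso
    have h1 : gOff M i0 ((seg k').2 + 1)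
        = gOff M i0 (seg k').1 + (spell M i0 (seg k').1 (seg k').2).length :=
      gOff_add M i0 (by have := hord k'; omega)
    have h3 : (seg k').2 + 1 ≤ (seg k).1 := seg_gap hord hadj k' k h
    have h4 := gOff_mono M i0 h3
    omega

end SRFHelp

/- ## EFG path lemmas -/
namespace EFG
variable {α : Type} (G : EFG α)

lemma pathLabel_append (p q : List G.V) :
    G.pathLabel (p ++ q) = G.pathLabel p ++ G.pathLabel q := by
  simp [pathLabel]

lemma pathLabel_cons (v : G.V) (p : List G.V) :
    G.pathLabel (v :: p) = G.label v ++ G.pathLabel p := by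
  simp [pathLabel]

lemma startPos_zero (p : List G.V) : G.startPos p 0 = 0 := by
  simp [startPos, pathLabel]

lemma startPos_succ (p : List G.V) (j : ℕ) (h : j < p.length) :
    G.startPos p (j + 1) = G.startPos p j + (G.label (p.get ⟨j, h⟩)).length := by
  rw [startPos, startPos, List.take_succ, List.getElem?_eq_getElem h, Option.toList_some,
    pathLabel_append]
  simp [pathLabel]

lemma startPos_full (p : List G.V) : G.startPos p p.length = (G.pathLabel p).length := by
  simp [startPos]

lemma pathLabel_drop_startPos (p : List G.V) (j : ℕ) (h : j < p.length) (d : ℕ) :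
    (G.pathLabel p).drop (G.startPos p j + d)
      = ((G.label (p.get ⟨j, h⟩)) ++ G.pathLabel (p.drop (j + 1))).drop d := by
  have key : G.pathLabel p
      = G.pathLabel (p.take j) ++ (G.label (p.get ⟨j, h⟩) ++ G.pathLabel (p.drop (j + 1))) := by
    conv_lhs => rw [← List.take_append_drop j p]
    rw [pathLabel_append]
    congr 1
    rw [List.drop_eq_getElem_cons h, pathLabel_cons]
    rfl
  rw [key, startPos, List.drop_length_add_append]

end EFG


/-- Characterization: for a proper segmentation of the MSA, the
induced elastic founder graph `G(S)` is semi-repeat-free if and only if every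
segment of the segmentation is semi-repeat-free. -/
theorem characterization {α : Type} {m n b : ℕ} (M : Fin m → Fin n → Option α)
    (seg : Fin b → ℕ × ℕ) (hb : 0 < b)
    (hfirst : (seg ⟨0, hb⟩).1 = 0)
    (hlast : (seg ⟨b - 1, Nat.sub_lt hb Nat.one_pos⟩).2 + 1 = n)
    (hord : ∀ k : Fin b, (seg k).1 ≤ (seg k).2)
    (hadj : ∀ (k : ℕ) (h : k + 1 < b),
      (seg ⟨k + 1, h⟩).1 = (seg ⟨k, Nat.lt_of_succ_lt h⟩).2 + 1)
    (hne : ∀ (k : Fin b) (i : Fin m), spell M i (seg k).1 (seg k).2 ≠ []) :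
    (inducedEFG M seg hne).SemiRepeatFree ↔
      ∀ k : Fin b, SegSRF M (seg k).1 (seg k).2 := by
  classical
  set G := inducedEFG M seg hne with hG
  have hlabel : ∀ w : G.V, G.label w = w.2.1 := fun _ => rfl
  have hblkdef : ∀ w : G.V, G.blk w = w.1 := fun _ => rfl
  constructor
  · -- graph SRF → segments SRF
    intro hsrf k i i' pp hpre
    -- the row path of row i'
    set f : Fin b → G.V :=
      fun t => ⟨t, ⟨spell M i' (seg t).1 (seg t).2, ⟨i', rfl⟩⟩⟩ with hf
    set P : List G.V := (List.finRange b).map f with hP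
    have hPlen : P.length = b := by simp [hP]
    have hPget : ∀ (t : ℕ) (ht : t < b), P.get ⟨t, by omega⟩ = f ⟨t, ht⟩ := by
      intro t ht
      simp [hP, List.getElem_map, List.getElem_finRange]
    have hpath : G.IsPath P := by
      constructor
      · exact List.ne_nil_of_length_pos (by rw [hPlen]; exact hb)
      · show List.IsChain G.E P
        rw [List.isChain_iff_getElem]
        intro t ht
        rw [hPlen] at ht
        rw [show P[t] = f ⟨t, by omega⟩ from hPget t (by omega),
          show P[t + 1] = f ⟨t + 1, by omega⟩ from hPget (t + 1) (by omega)]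
        exact ⟨rfl, i', rfl, rfl⟩
    -- path label prefixes
    have htake : ∀ j, j ≤ b → G.pathLabel (P.take j) =
        SRFHelp.colP M i' (if h : j < b then (seg ⟨j, h⟩).1 else n) := by
      intro j
      induction j with
      | zero =>
        intro _
        rw [dif_pos hb, hfirst, SRFHelp.colP_zero]
        simp [EFG.pathLabel]
      | succ j ih =>
        intro hjb
        have hj : j < b := by omega
        have hPj : P[j] = f ⟨j, hj⟩ := hPget j hj
        have hjP : j < P.length := by omega
        rw [List.take_succ, List.getElem?_eq_getElem hjP,
          Option.toList_some, G.pathLabel_append, ih (by omega), hPj]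
        have hlabf : G.pathLabel [f ⟨j, hj⟩] = spell M i' (seg ⟨j, hj⟩).1 (seg ⟨j, hj⟩).2 := by
          simp [EFG.pathLabel, hlabel]; rfl
        rw [hlabf, dif_pos hj]
        rcases Nat.lt_or_ge (j + 1) b with h1 | h1
        · rw [dif_pos h1, hadj j h1]
          exact (SRFHelp.colP_split M i' (x := (seg ⟨j, hj⟩).1) (y := (seg ⟨j, hj⟩).2)
            (by have := hord ⟨j, hj⟩; omega)).symm
        · rw [dif_neg (by omega)]
          have hjb1 : j = b - 1 := by omega
          have : (seg ⟨j, hj⟩).2 + 1 = n := by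
            subst hjb1; exact hlast
          rw [show SRFHelp.colP M i' n = SRFHelp.colP M i' ((seg ⟨j, hj⟩).2 + 1) from by
            rw [this]]
          exact (SRFHelp.colP_split M i' (x := (seg ⟨j, hj⟩).1) (y := (seg ⟨j, hj⟩).2)
            (by have := hord ⟨j, hj⟩; omega)).symm
    have hlab : G.pathLabel P = row M i' := by
      have := htake b le_rfl
      rw [dif_neg (by omega), SRFHelp.colP_n] at this
      rw [← this]
      congr 1
      rw [← hPlen, List.take_length]
    -- apply SRF to the vertex for (k, i)
    set v : G.V := ⟨k, ⟨spell M i (seg k).1 (seg k).2, ⟨i, rfl⟩⟩⟩ with hv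
    obtain ⟨j, hj, hpp, hblk⟩ := hsrf v P hpath pp (by rw [hlab]; exact hpre)
    rw [hPlen] at hj
    have hgetj := hPget j hj
    rw [hgetj] at hblk
    have hjk : (⟨j, hj⟩ : Fin b) = k := hblk
    have hstart : G.startPos P j = gOff M i' (seg k).1 := by
      rw [EFG.startPos, htake j (by omega), dif_pos hj, SRFHelp.gOff_eq, hjk]
    rw [hpp, hstart]
  · -- segments SRF → graph SRF
    intro hseg v p hpath i hpre
    obtain ⟨hpne, hchain⟩ := hpath
    obtain ⟨iv, hiv⟩ := v.2.2
    have hvne : G.label v ≠ [] := G.label_ne v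
    have hvpos : 0 < (G.label v).length := List.length_pos_iff.2 hvne
    have hi : i < (G.pathLabel p).length := by
      by_contra hcon
      push_neg at hcon
      rw [List.drop_eq_nil_of_le hcon] at hpre
      exact hvne (List.prefix_nil.1 hpre)
    -- find the node containing position i
    have H : ∃ j0, ∃ hj0lt : j0 < p.length,
        G.startPos p j0 ≤ i ∧ i < G.startPos p (j0 + 1) := by
      classical
      set P0 : ℕ → Prop := fun j => G.startPos p j ≤ i with hP0
      set j0 := Nat.findGreatest P0 p.length with hj0
      have h0le : P0 0 := by rw [hP0]; simp only []; rw [G.startPos_zero]; omega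
      have hj0le : P0 j0 := by
        rw [hj0]; exact Nat.findGreatest_spec (Nat.zero_le _) h0le
      have hj0b : j0 ≤ p.length := by rw [hj0]; exact Nat.findGreatest_le _
      have hj0lt : j0 < p.length := by
        rcases Nat.lt_or_ge j0 p.length with h | h
        · exact h
        · exfalso
          have hj0eq : j0 = p.length := by omega
          have : G.startPos p j0 ≤ i := hj0le
          rw [hj0eq, G.startPos_full] at this
          omega
      refine ⟨j0, hj0lt, hj0le, ?_⟩
      by_contra hcon
      push_neg at hcon
      have h2 : j0 + 1 ≤ j0 := by
        rw [hj0]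
        exact Nat.le_findGreatest (by omega) hcon
      omega
    obtain ⟨j0, hj0lt, hj0le, hnext⟩ := H
    have hsucc := G.startPos_succ p j0 hj0lt
    obtain ⟨u0, hu0⟩ : ∃ u, p.get ⟨j0, hj0lt⟩ = u := ⟨_, rfl⟩
    rw [hu0] at hsucc
    obtain ⟨d, hi_eq⟩ : ∃ d, i = G.startPos p j0 + d := ⟨i - G.startPos p j0, by omega⟩
    have hd : d < (G.label u0).length := by omega
    have hdecomp : (G.pathLabel p).drop i
        = (G.label u0).drop d ++ G.pathLabel (p.drop (j0 + 1)) := by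
      rw [hi_eq, G.pathLabel_drop_startPos p j0 hj0lt d, hu0,
        List.drop_append_of_le_length (by omega)]
    rw [hdecomp] at hpre
    -- the common finishing move
    have finish : ∀ i0 : Fin m,
        G.label u0 = spell M i0 (seg u0.1).1 (seg u0.1).2 →
        gOff M i0 (seg u0.1).1 + d = gOff M i0 (seg v.1).1 →
        ∃ j, ∃ h : j < p.length, i = G.startPos p j ∧
          G.blk (p.get ⟨j, h⟩) = G.blk v := by
      intro i0 hl0 heq
      have hd' : d < (spell M i0 (seg u0.1).1 (seg u0.1).2).length := by
        rw [← hl0]; omega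
      obtain ⟨hkk, hd0⟩ := SRFHelp.uniq M hord hadj hne i0 v.1 u0.1 d hd' heq
      refine ⟨j0, hj0lt, by omega, ?_⟩
      rw [hu0]
      exact Fin.ext hkk.symm
    rcases le_or_gt (G.label v).length ((G.label u0).length - d) with hc | hc
    · -- case a: occurrence inside label u0
      have h1 : G.label v <+: (G.label u0).drop d :=
        SRFHelp.prefix_short hpre (by rw [List.length_drop]; omega)
      obtain ⟨i0, hi0⟩ := u0.2.2
      have hl0 : G.label u0 = spell M i0 (seg u0.1).1 (seg u0.1).2 := hi0
      have h2 : G.label u0 <+: (row M i0).drop (gOff M i0 (seg u0.1).1) := by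
        rw [hl0]
        exact SRFHelp.spell_prefix_row M i0 (by have := hord u0.1; omega)
      have h3 : (G.label u0).drop d <+: (row M i0).drop (gOff M i0 (seg u0.1).1 + d) := by
        have h9 := h2.drop d
        rw [List.drop_drop] at h9
        exact h9
      have hocc : spell M iv (seg v.1).1 (seg v.1).2
          <+: (row M i0).drop (gOff M i0 (seg u0.1).1 + d) := by
        rw [← hiv]; exact h1.trans h3
      exact finish i0 hl0 (hseg v.1 iv i0 _ hocc)
    · -- case b: occurrence extends past label u0
      have hjlt2 : j0 + 1 < p.length := by
        by_contra hcon
        push_neg at hcon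
        rw [List.drop_eq_nil_of_le hcon] at hpre
        have hemp : G.pathLabel ([] : List G.V) = [] := by simp [EFG.pathLabel]
        rw [hemp, List.append_nil] at hpre
        have := hpre.length_le
        rw [List.length_drop] at this
        omega
      obtain ⟨u1, hu1⟩ : ∃ u, p.get ⟨j0 + 1, hjlt2⟩ = u := ⟨_, rfl⟩
      have hE : G.E u0 u1 := by
        have h7 : G.E (p.get ⟨j0, hj0lt⟩) (p.get ⟨j0 + 1, hjlt2⟩) :=
            List.isChain_iff_getElem.1 hchain j0 (by omega)
        rwa [hu0, hu1] at h7
      obtain ⟨hblk1, i0, h0, h1⟩ :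
          ((u1.1 : ℕ) = (u0.1 : ℕ) + 1) ∧
          ∃ i0 : Fin m, u0.2.1 = spell M i0 (seg u0.1).1 (seg u0.1).2 ∧
            u1.2.1 = spell M i0 (seg u1.1).1 (seg u1.1).2 := hE
      have hl0 : G.label u0 = spell M i0 (seg u0.1).1 (seg u0.1).2 := h0
      have hl1 : G.label u1 = spell M i0 (seg u1.1).1 (seg u1.1).2 := h1
      have hrest : G.pathLabel (p.drop (j0 + 1))
          = G.label u1 ++ G.pathLabel (p.drop (j0 + 2)) := by
        rw [List.drop_eq_getElem_cons hjlt2, G.pathLabel_cons,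
          (show p[j0 + 1] = u1 from hu1)]
      rw [hrest] at hpre
      have hu1ne : G.label u1 ≠ [] := G.label_ne u1
      have hu1pos : 0 < (G.label u1).length := List.length_pos_iff.2 hu1ne
      rcases le_or_gt (G.label v).length
          (((G.label u0).length - d) + (G.label u1).length) with hc2 | hc2
      · -- case b1: occurrence inside label u0 ++ label u1
        rw [← List.append_assoc] at hpre
        have hpre' : G.label v <+: ((G.label u0).drop d ++ G.label u1) :=
          SRFHelp.prefix_short hpre (by rw [List.length_append, List.length_drop]; omega)
        -- decompose row i0
        have hb1 : (u0.1 : ℕ) + 1 < b := by rw [← hblk1]; exact u1.1.isLt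
        have hadj1 : (seg u1.1).1 = (seg u0.1).2 + 1 := by
          have h8 := hadj (u0.1 : ℕ) hb1
          have he1 : (⟨(u0.1 : ℕ) + 1, hb1⟩ : Fin b) = u1.1 := Fin.ext hblk1.symm
          have he2 : (⟨(u0.1 : ℕ), Nat.lt_of_succ_lt hb1⟩ : Fin b) = u0.1 := Fin.ext rfl
          rw [he1, he2] at h8
          exact h8
        have e1 : (row M i0).drop (gOff M i0 (seg u0.1).1)
            = G.label u0 ++ (G.label u1 ++ SRFHelp.colQ M i0 ((seg u1.1).2 + 1)) := by
          rw [SRFHelp.row_drop_gOff,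
            SRFHelp.colQ_split M i0 (x := (seg u0.1).1) (y := (seg u0.1).2)
              (by have := hord u0.1; omega),
            ← hl0, ← hadj1,
            SRFHelp.colQ_split M i0 (x := (seg u1.1).1) (y := (seg u1.1).2)
              (by have := hord u1.1; omega),
            ← hl1]
        have e2 : (row M i0).drop (gOff M i0 (seg u0.1).1 + d)
            = (G.label u0).drop d ++ (G.label u1 ++ SRFHelp.colQ M i0 ((seg u1.1).2 + 1)) := by
          rw [← List.drop_drop, e1,
            List.drop_append_of_le_length (by omega)]
        have hocc : spell M iv (seg v.1).1 (seg v.1).2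
            <+: (row M i0).drop (gOff M i0 (seg u0.1).1 + d) := by
          rw [← hiv, e2, ← List.append_assoc]
          exact hpre'.trans (List.prefix_append _ _)
        exact finish i0 hl0 (hseg v.1 iv i0 _ hocc)
      · -- case b2: label u1 strictly inside label v -- contradiction
        exfalso
        have hdl : ((G.label u0).drop d).length = (G.label u0).length - d := by
          rw [List.length_drop]
        have h5 : (G.label v).drop ((G.label u0).length - d)
            <+: (G.label u1 ++ G.pathLabel (p.drop (j0 + 2))) := by
          have h6 := hpre.drop ((G.label u0).length - d)
          rw [← hdl, List.drop_left] at h6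
          rwa [hdl] at h6
        have hu1pre : G.label u1 <+: (G.label v).drop ((G.label u0).length - d) :=
          SRFHelp.prefix_mid h5 (by rw [List.length_drop]; omega)
        have hvrow : G.label v <+: (row M iv).drop (gOff M iv (seg v.1).1) := by
          rw [hlabel v, hiv]
          exact SRFHelp.spell_prefix_row M iv (by have := hord v.1; omega)
        have hocc : spell M i0 (seg u1.1).1 (seg u1.1).2
            <+: (row M iv).drop (gOff M iv (seg v.1).1 + ((G.label u0).length - d)) := by
          rw [← hl1]
          refine hu1pre.trans ?_
          have h9 := hvrow.drop ((G.label u0).length - d)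
          rw [List.drop_drop] at h9
          exact h9
        have heq := hseg u1.1 i0 iv _ hocc
        -- heq : gOff M iv (seg v.1).1 + ((G.label u0).length - d) = gOff M iv (seg u1.1).1
        have hL : gOff M iv ((seg v.1).2 + 1)
            = gOff M iv (seg v.1).1 + (G.label v).length := by
          rw [hlabel v, hiv]
          exact SRFHelp.gOff_add M iv (by have := hord v.1; omega)
        rcases le_or_gt ((u1.1 : ℕ)) ((v.1 : ℕ)) with hcmp | hcmp
        · have := SRFHelp.gOff_mono M iv (SRFHelp.seg_x_mono hord hadj u1.1 v.1 hcmp)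
          omega
        · have h6 : (seg v.1).2 + 1 ≤ (seg u1.1).1 := SRFHelp.seg_gap hord hadj v.1 u1.1 hcmp
          have := SRFHelp.gOff_mono M iv h6
          omega
end

section
/- For a general MSA[1..m][1..n] over Σ ∪ {-}, the semi-repeat-free property of segments is closed under right extension: if the segment [x+1..y] is semi-repeat-free, then the segment [x+1..y'] is semi-repeat-free for all y < y' ≤ n. -/
lemma filterMap_cond_prefix {α : Type} {n : ℕ} (f : Fin n → Option α) (x y y' : ℕ)
    (hyy' : y ≤ y') :
    ∀ (l : List (Fin n)), l.Pairwise (fun a b : Fin n => a < b) →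
      (l.filterMap (fun (c : Fin n) => if x ≤ (c : ℕ) ∧ (c : ℕ) ≤ y then f c else none)) <+:
      (l.filterMap (fun (c : Fin n) => if x ≤ (c : ℕ) ∧ (c : ℕ) ≤ y' then f c else none)) := by
  intro l hl
  induction l with
  | nil => simp
  | cons c cs ih =>
    rw [List.pairwise_cons] at hl
    obtain ⟨hc, hcs⟩ := hl
    rw [List.filterMap_cons, List.filterMap_cons]
    by_cases h1 : x ≤ (c : ℕ) ∧ (c : ℕ) ≤ y
    · have h2 : x ≤ (c : ℕ) ∧ (c : ℕ) ≤ y' := ⟨h1.1, le_trans h1.2 hyy'⟩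
      rw [if_pos h1, if_pos h2]
      cases f c with
      | none => exact ih hcs
      | some a => exact (List.prefix_cons_inj a).mpr (ih hcs)
    · rw [if_neg h1]
      by_cases h3 : (c : ℕ) ≤ y
      · -- then x > c, so condition for y' also fails at c
        have hx : ¬ x ≤ (c : ℕ) := fun hx => h1 ⟨hx, h3⟩
        have h2 : ¬ (x ≤ (c : ℕ) ∧ (c : ℕ) ≤ y') := fun h2 => hx h2.1
        rw [if_neg h2]
        exact ih hcs
      · -- c > y, so all elements of cs are > y too, so the y-filterMap of cs is []
        push_neg at h3
        have : cs.filterMap (fun (c : Fin n) => if x ≤ (c : ℕ) ∧ (c : ℕ) ≤ y then f c else none) = [] := by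
          apply List.filterMap_eq_nil_iff.mpr
          intro (a : Fin n) ha
          have : y < (a : ℕ) := lt_trans h3 (hc a ha)
          rw [if_neg (fun hh => absurd hh.2 (not_le.mpr this))]
        rw [this]
        exact List.nil_prefix

lemma spell_prefix_of_le {α : Type} {m n : ℕ} (M : Fin m → Fin n → Option α) (i : Fin m)
    (x y y' : ℕ) (hyy' : y ≤ y') : spell M i x y <+: spell M i x y' :=
  filterMap_cond_prefix (M i) x y y' hyy' (List.finRange n) (List.pairwise_lt_finRange n)

/-- the semi-repeat-free property of MSA segments is closed under
right extension: if segment `[x..y]` is semi-repeat-free then so is `[x..y']`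
for every `y < y' ≤ n` (columns 0-indexed, so `y' < n`). -/
theorem segSRF_right_extension {α : Type} {m n : ℕ} (M : Fin m → Fin n → Option α)
    (x y y' : ℕ) (h : SegSRF M x y) (hyy' : y < y') (hy'n : y' < n) :
    SegSRF M x y' := by
  intro i i' p hp
  exact h i i' p ((spell_prefix_of_le M i x y y' (le_of_lt hyy')).trans hp)
end

section
/- For a gapless MSA[1..m][1..n], left extensions are monotone: if the segment [x..y] is repeat-free then [x'..y] is repeat-free for all x' < x; moreover, the segment heights satisfy m ≥ H([x'..y]) ≥ H([x..y]) for all x' < x, where H([x..y]) is the number of distinct strings among MSA[i][x..y] for i ∈ [1..m]. -/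
/-- The string of row `i` of a gapless MSA in columns `x..y` (0-indexed, inclusive). -/
def gseg {α : Type} {m n : ℕ} (M : Fin m → Fin n → α) (i : Fin m) (x y : ℕ) : List α :=
  (List.finRange n).filterMap
    (fun (c : Fin n) => if x ≤ (c : ℕ) ∧ (c : ℕ) ≤ y then some (M i c) else none)

/-- A segment `[x..y]` of a gapless MSA is repeat-free: each `MSA[i][x..y]` occurs
in the MSA only at column `x` of some row. -/
def RepeatFree {α : Type} {m n : ℕ} (M : Fin m → Fin n → α) (x y : ℕ) : Prop :=
  ∀ (i i' : Fin m) (x' : ℕ), x' + (y - x) < n →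
    gseg M i x y = gseg M i' x' (x' + (y - x)) → x' = x

/-- The height of a segment: the number of distinct strings in it. -/
noncomputable def gheight {α : Type} {m n : ℕ} (M : Fin m → Fin n → α) (x y : ℕ) : ℕ :=
  {S : List α | ∃ i : Fin m, S = gseg M i x y}.ncard

/-- Auxiliary: filterMap of a window condition over `range n`. -/
lemma aux_range {α : Type} (f : ℕ → α) (x y n : ℕ) (hy : y < n) :
    (List.range n).filterMap (fun c => if x ≤ c ∧ c ≤ y then some (f c) else none)
      = (List.range (y + 1 - x)).map (fun k => f (x + k)) := by
  have hsplit : n = (y + 1) + (n - (y + 1)) := by omega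
  rw [hsplit, List.range_add, List.filterMap_append]
  have h2 : (List.filterMap (fun c => if x ≤ c ∧ c ≤ y then some (f c) else none)
      (List.map (fun x => y + 1 + x) (List.range (n - (y + 1))))) = [] := by
    rw [List.filterMap_map, List.filterMap_eq_nil_iff]
    intro a _
    simp only [Function.comp_apply, ite_eq_right_iff]
    omega
  rw [h2, List.append_nil]
  by_cases hxy : x ≤ y
  · have hsplit2 : y + 1 = x + (y + 1 - x) := by omega
    rw [hsplit2, List.range_add, List.filterMap_append]
    have h3 : (List.range x).filterMap
        (fun c => if x ≤ c ∧ c ≤ y then some (f c) else none) = [] := by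
      rw [List.filterMap_eq_nil_iff]
      intro a ha
      simp only [List.mem_range] at ha
      simp only [ite_eq_right_iff]
      omega
    rw [h3, List.nil_append, List.filterMap_map]
    have hr : x + (y + 1 - x) - x = y + 1 - x := by omega
    rw [hr]
    apply List.filterMap_eq_map_iff_forall_eq_some.mpr
    intro a ha
    simp only [List.mem_range] at ha
    simp only [Function.comp_apply]
    rw [if_pos (by omega)]
  · have : y + 1 - x = 0 := by omega
    rw [this]
    simp only [List.range_zero, List.map_nil]
    rw [List.filterMap_eq_nil_iff]
    intro a ha
    simp only [List.mem_range] at ha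
    simp only [ite_eq_right_iff]
    omega

/-- `gseg` as an explicit list of entries, via any total extension `f` of row `i`. -/
lemma gseg_eq {α : Type} {m n : ℕ} (M : Fin m → Fin n → α) (i : Fin m)
    (a b : ℕ) (hb : b < n) (f : ℕ → α) (hf : ∀ c : Fin n, f (c : ℕ) = M i c) :
    gseg M i a b = (List.range (b + 1 - a)).map (fun k => f (a + k)) := by
  unfold gseg
  have hfun : (fun (c : Fin n) => if a ≤ (c : ℕ) ∧ (c : ℕ) ≤ b then some (M i c) else none)
      = (fun (c : ℕ) => if a ≤ c ∧ c ≤ b then some (f c) else none) ∘ Fin.val := by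
    funext c
    simp [hf c]
  rw [hfun, ← List.filterMap_map, List.map_coe_finRange_eq_range, aux_range f a b n hb]

/-- Dropping `d` entries from a segment shifts its left end by `d`. -/
lemma gseg_drop {α : Type} {m n : ℕ} (M : Fin m → Fin n → α) (i : Fin m)
    (a b d : ℕ) (hb : b < n) :
    (gseg M i a b).drop d = gseg M i (a + d) b := by
  have hn : 0 < n := by omega
  set f : ℕ → α := fun c => if h : c < n then M i ⟨c, h⟩ else M i ⟨0, hn⟩ with hfdef
  have hf : ∀ c : Fin n, f (c : ℕ) = M i c := by
    intro c
    simp [hfdef, c.isLt]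
  rw [gseg_eq M i a b hb f hf, gseg_eq M i (a + d) b hb f hf]
  apply List.ext_getElem
  · simp; omega
  · intro k h1 h2
    simp only [List.getElem_drop, List.getElem_map, List.getElem_range]
    congr 1
    omega

/-- for a gapless MSA, left extensions are monotone: if `[x..y]` is
repeat-free then `[x'..y]` is repeat-free for all `x' < x`, and moreover
`m ≥ H([x'..y]) ≥ H([x..y])` for all `x' < x`. -/
theorem left_extension_monotonicity {α : Type} {m n : ℕ} (M : Fin m → Fin n → α)
    (x y : ℕ) (hxy : x ≤ y) (hyn : y < n) :
    (RepeatFree M x y → ∀ x' < x, RepeatFree M x' y) ∧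
    (∀ x' < x, gheight M x' y ≤ m ∧ gheight M x y ≤ gheight M x' y) := by
  constructor
  · intro hRF x'' hx'' i i' z hz heq
    have d := x - x''
    have key := congrArg (List.drop (x - x'')) heq
    rw [gseg_drop M i x'' y (x - x'') hyn, gseg_drop M i' z _ (x - x'') hz] at key
    have hx : x'' + (x - x'') = x := by omega
    rw [hx] at key
    have h1 : z + (y - x'') = (z + (x - x'')) + (y - x) := by omega
    rw [h1] at key
    have := hRF i i' (z + (x - x'')) (by omega) key
    omega
  · intro x' hx'
    constructor
    · have : {S : List α | ∃ i : Fin m, S = gseg M i x' y} = Set.range (fun i => gseg M i x' y) := by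
        ext S; simp [Set.range, eq_comm]
      rw [gheight, this]
      calc (Set.range fun i => gseg M i x' y).ncard
          ≤ (Set.univ : Set (Fin m)).ncard := by
            rw [← Set.image_univ]
            exact Set.ncard_image_le Set.finite_univ
        _ = m := by rw [Set.ncard_univ]; simp
    · rw [gheight, gheight]
      have himg : {S : List α | ∃ i : Fin m, S = gseg M i x y}
          = (List.drop (x - x')) '' {S : List α | ∃ i : Fin m, S = gseg M i x' y} := by
        ext S
        simp only [Set.mem_setOf_eq, Set.mem_image]
        constructor
        · rintro ⟨i, rfl⟩
          exact ⟨gseg M i x' y, ⟨i, rfl⟩, by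
            rw [gseg_drop M i x' y (x - x') hyn]; congr 1; omega⟩
        · rintro ⟨T, ⟨i, rfl⟩, hT⟩
          refine ⟨i, ?_⟩
          rw [← hT, gseg_drop M i x' y (x - x') hyn]
          congr 1; omega
      rw [himg]
      apply Set.ncard_image_le
      have : {S : List α | ∃ i : Fin m, S = gseg M i x' y} = Set.range (fun i => gseg M i x' y) := by
        ext S; simp [Set.range, eq_comm]
      rw [this]
      exact Set.finite_range _
end

section
/- The prefix-aware height of MSA segments is monotone under right extension: for an MSA[1..m][1..n] over Σ ∪ {-} and any x, the function y ↦ H̄([x..y]) is nondecreasing in y, where H̄([x..y]) is the number of distinct strings S in {spell(MSA[i][x..y]) : 1 ≤ i ≤ m} that are not a proper prefix of another string in that set. Consequently, for fixed x, the number of columns y where H̄([x..y]) ≠ H̄([x..y-1]) is at most m. -/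
/-- The prefix-aware height of segment `[x..y]`: the number of distinct spelled
strings that are not a (proper) prefix of another distinct spelled string. -/
noncomputable def paHeight {α : Type} {m n : ℕ} (M : Fin m → Fin n → Option α)
    (x y : ℕ) : ℕ :=
  {S : List α | (∃ i : Fin m, S = spell M i x y) ∧
    ∀ S' : List α, (∃ i' : Fin m, S' = spell M i' x y) → S ≠ S' → ¬ S <+: S'}.ncard

private lemma pairwise_le_finRange (n : ℕ) :
    (List.finRange n).Pairwise (fun a b : Fin n => (a : ℕ) ≤ (b : ℕ)) :=
  (List.pairwise_lt_finRange n).imp (fun h => Nat.le_of_lt h)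

private lemma filterMap_split {α : Type} {n : ℕ} (f : Fin n → Option α) (x y y' : ℕ)
    (hyy : y ≤ y') :
    ∀ L : List (Fin n), L.Pairwise (fun a b : Fin n => (a : ℕ) ≤ (b : ℕ)) →
      L.filterMap (fun c : Fin n => if x ≤ (c : ℕ) ∧ (c : ℕ) ≤ y' then f c else none)
        = L.filterMap (fun c : Fin n => if x ≤ (c : ℕ) ∧ (c : ℕ) ≤ y then f c else none)
          ++ L.filterMap (fun c : Fin n => if x ≤ (c : ℕ) ∧ y < (c : ℕ) ∧ (c : ℕ) ≤ y' then f c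
              else none) := by
  intro L hL
  induction L with
  | nil => rfl
  | cons c L ih =>
    rw [List.pairwise_cons] at hL
    obtain ⟨hc, hL⟩ := hL
    have IH := ih hL
    by_cases hx : x ≤ (c : ℕ)
    · by_cases hy : (c : ℕ) ≤ y
      · have hy' : (c : ℕ) ≤ y' := hy.trans hyy
        simp only [List.filterMap_cons]
        rw [if_pos ⟨hx, hy'⟩, if_pos ⟨hx, hy⟩, if_neg (by omega)]
        cases f c <;> simp [IH]
      · by_cases hy' : (c : ℕ) ≤ y'
        · have hmid : L.filterMap
              (fun c : Fin n => if x ≤ (c : ℕ) ∧ (c : ℕ) ≤ y then f c else none) = [] := by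
            rw [List.filterMap_eq_nil_iff]
            intro b hb
            have := hc b hb
            rw [if_neg (by omega)]
          have hcong : L.filterMap
              (fun c : Fin n => if x ≤ (c : ℕ) ∧ (c : ℕ) ≤ y' then f c else none)
              = L.filterMap
                (fun c : Fin n => if x ≤ (c : ℕ) ∧ y < (c : ℕ) ∧ (c : ℕ) ≤ y' then f c else none) := by
            apply List.filterMap_congr
            intro b hb
            have := hc b hb
            by_cases hxb : x ≤ (b : ℕ) ∧ (b : ℕ) ≤ y'
            · rw [if_pos hxb, if_pos ⟨hxb.1, by omega, hxb.2⟩]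
            · rw [if_neg hxb, if_neg (by omega)]
          simp only [List.filterMap_cons]
          rw [if_pos ⟨hx, hy'⟩, if_neg (by omega), if_pos ⟨hx, by omega, hy'⟩, hmid, hcong]
          cases f c <;> simp
        · simp only [List.filterMap_cons]
          rw [if_neg (by omega), if_neg (by omega), if_neg (by omega)]
          exact IH
    · simp only [List.filterMap_cons]
      rw [if_neg (by omega), if_neg (by omega), if_neg (by omega)]
      exact IH

private lemma spell_prefix {α : Type} {m n : ℕ} (M : Fin m → Fin n → Option α) (i : Fin m)
    (x : ℕ) {y y' : ℕ} (h : y ≤ y') : spell M i x y <+: spell M i x y' :=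
  ⟨_, (filterMap_split (M i) x y y' h (List.finRange n) (pairwise_le_finRange n)).symm⟩

/-- In a finite set of lists, every element is a prefix of some maximal element. -/
private lemma exists_maximal_ext {α : Type} {F : Set (List α)} (hF : F.Finite)
    {S : List α} (hS : S ∈ F) :
    ∃ U ∈ F, S <+: U ∧ ∀ V ∈ F, U ≠ V → ¬ U <+: V := by
  have hne : ({T | T ∈ F ∧ S <+: T}).Nonempty := ⟨S, hS, List.prefix_refl S⟩
  obtain ⟨U, hU, hmax⟩ := Set.Finite.exists_maximalFor List.length _
    (hF.subset (fun T hT => hT.1)) hne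
  refine ⟨U, hU.1, hU.2, ?_⟩
  intro V hV hne' hpre
  have hVmem : V ∈ {T | T ∈ F ∧ S <+: T} := ⟨hV, hU.2.trans hpre⟩
  exact hne' (hpre.eq_of_length (le_antisymm hpre.length_le (hmax hVmem hpre.length_le)))

/-- The set of maximal (non-prefix) spelled strings for segment `[x..y]`. -/
private def paSet {α : Type} {m n : ℕ} (M : Fin m → Fin n → Option α) (x y : ℕ) :
    Set (List α) :=
  {S : List α | (∃ i : Fin m, S = spell M i x y) ∧
    ∀ S' : List α, (∃ i' : Fin m, S' = spell M i' x y) → S ≠ S' → ¬ S <+: S'}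

private lemma paSet_finite {α : Type} {m n : ℕ} (M : Fin m → Fin n → Option α) (x y : ℕ) :
    (paSet M x y).Finite :=
  (Set.finite_range (fun i : Fin m => spell M i x y)).subset
    (fun _ hS => by obtain ⟨i, hi⟩ := hS.1; exact ⟨i, hi.symm⟩)

private lemma paHeight_mono {α : Type} {m n : ℕ} (M : Fin m → Fin n → Option α)
    (x : ℕ) {y y' : ℕ} (h : y ≤ y') : paHeight M x y ≤ paHeight M x y' := by
  classical
  have key : ∀ S ∈ paSet M x y, ∃ U, U ∈ paSet M x y' ∧ S <+: U := by
    intro S hS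
    obtain ⟨i, hi⟩ := hS.1
    have hpre : S <+: spell M i x y' := hi ▸ spell_prefix M i x h
    obtain ⟨U, hU, hEU, hmax⟩ := exists_maximal_ext
      (Set.finite_range (fun i : Fin m => spell M i x y'))
      (Set.mem_range_self (f := fun i : Fin m => spell M i x y') i)
    refine ⟨U, ⟨?_, ?_⟩, hpre.trans hEU⟩
    · obtain ⟨j, hj⟩ := hU; exact ⟨j, hj.symm⟩
    · intro V hV hne hp
      obtain ⟨j, hj⟩ := hV
      exact hmax V ⟨j, hj.symm⟩ hne hp
  set f : List α → List α := fun S =>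
    if hS : ∃ U, U ∈ paSet M x y' ∧ S <+: U then hS.choose else []
  have hf : ∀ S ∈ paSet M x y, f S ∈ paSet M x y' ∧ S <+: f S := by
    intro S hS
    have hex := key S hS
    simp only [f, dif_pos hex]
    exact hex.choose_spec
  have hmaps : ∀ S ∈ paSet M x y, f S ∈ paSet M x y' := fun S hS => (hf S hS).1
  have hinj : Set.InjOn f (paSet M x y) := by
    intro S₁ h₁ S₂ h₂ heq
    have p₁ : S₁ <+: f S₁ := (hf S₁ h₁).2
    have p₂ : S₂ <+: f S₁ := heq ▸ (hf S₂ h₂).2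
    by_contra hne
    rcases List.prefix_or_prefix_of_prefix p₁ p₂ with hp | hp
    · exact h₁.2 S₂ h₂.1 hne hp
    · exact h₂.2 S₁ h₁.1 (fun e => hne e.symm) hp
  exact Set.ncard_le_ncard_of_injOn f hmaps hinj (paSet_finite M x y')

private lemma paHeight_le {α : Type} {m n : ℕ} (M : Fin m → Fin n → Option α)
    (x y : ℕ) : paHeight M x y ≤ m := by
  classical
  have h1 : paHeight M x y ≤ (Set.range (fun i : Fin m => spell M i x y)).ncard :=
    Set.ncard_le_ncard (fun S hS => by obtain ⟨i, hi⟩ := hS.1; exact ⟨i, hi.symm⟩)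
      (Set.finite_range _)
  have h2 : (Set.range (fun i : Fin m => spell M i x y)).ncard ≤ m := by
    rw [← Set.image_univ]
    calc ((Set.univ : Set (Fin m)).image _).ncard ≤ (Set.univ : Set (Fin m)).ncard :=
          Set.ncard_image_le Set.finite_univ
      _ = m := by rw [Set.ncard_univ]; simp
  exact h1.trans h2

/-- the prefix-aware height is monotone under right extension, and
consequently, for fixed `x`, there are at most `m` columns `y` where it changes. -/
theorem paHeight_monotone {α : Type} {m n : ℕ} (M : Fin m → Fin n → Option α)
    (x : ℕ) :
    (∀ y y' : ℕ, y ≤ y' → paHeight M x y ≤ paHeight M x y') ∧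
    {y : ℕ | x < y ∧ y < n ∧ paHeight M x y ≠ paHeight M x (y - 1)}.ncard ≤ m := by
  have hmono : ∀ y y' : ℕ, y ≤ y' → paHeight M x y ≤ paHeight M x y' :=
    fun y y' h => paHeight_mono M x h
  refine ⟨hmono, ?_⟩
  set C := {y : ℕ | x < y ∧ y < n ∧ paHeight M x y ≠ paHeight M x (y - 1)}
  have hstrict : ∀ y ∈ C, paHeight M x (y - 1) < paHeight M x y := by
    intro y hy
    exact lt_of_le_of_ne (hmono (y - 1) y (Nat.sub_le y 1)) (Ne.symm hy.2.2)
  have hmaps : ∀ y ∈ C, paHeight M x y ∈ Set.Icc 1 m := by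
    intro y hy
    have := hstrict y hy
    exact ⟨by omega, paHeight_le M x y⟩
  have key : ∀ y₁ ∈ C, ∀ y₂ ∈ C, y₁ < y₂ → paHeight M x y₁ < paHeight M x y₂ := by
    intro y₁ h₁ y₂ h₂ hlt
    calc paHeight M x y₁ ≤ paHeight M x (y₂ - 1) := hmono _ _ (by omega)
      _ < paHeight M x y₂ := hstrict y₂ h₂
  have hinj : Set.InjOn (paHeight M x) C := by
    intro y₁ h₁ y₂ h₂ heq
    by_contra hne
    rcases Nat.lt_or_ge y₁ y₂ with h | h
    · exact absurd heq (key y₁ h₁ y₂ h₂ h).ne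
    · exact absurd heq.symm (key y₂ h₂ y₁ h₁ (by omega)).ne
  calc C.ncard ≤ (Set.Icc 1 m).ncard :=
        Set.ncard_le_ncard_of_injOn (paHeight M x) hmaps hinj (Set.finite_Icc 1 m)
    _ = m := by rw [← Finset.coe_Icc, Set.ncard_coe_finset, Nat.card_Icc]; omega
end

section
/- For the exclusive ancestor set problem: given a rooted tree T = (V, E, root) with leaf set L^T and a nonempty proper subset L ⊊ L^T of leaves, there exists a unique minimal set W ⊆ V of vertices such that the set of leaves in the subtrees rooted at vertices of W is exactly L and the subtrees are pairwise disjoint. Moreover, W consists exactly of those vertices v such that every leaf below v is in L but some leaf below parent(v) is not in L. -/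
/-- A rooted tree on vertex set `V`, given by a parent function: the root is its
own parent and every vertex reaches the root by iterating `parent`. -/
structure RTree (V : Type) where
  root : V
  parent : V → V
  parent_root : parent root = root
  reaches_root : ∀ v, ∃ k, parent^[k] v = root

namespace RTree
variable {V : Type} (T : RTree V)

/-- `u` is a descendant of `v` (lies in the subtree rooted at `v`). -/
def Desc (u v : V) : Prop := ∃ k, T.parent^[k] u = v

/-- A vertex is a leaf if it has no (other) vertex as a child. -/
def IsLeaf (v : V) : Prop := ∀ u, T.parent u = v → u = v

/-- The set of leaves covered by `v`, i.e. the leaves of the subtree rooted at `v`. -/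
def cov (v : V) : Set V := {l | T.IsLeaf l ∧ T.Desc l v}

/-- The set of leaves of `T`. -/
def leaves : Set V := {l | T.IsLeaf l}

/-- `W` is an exclusive ancestor set of the leaf set `L`: the leaves covered by
the vertices of `W` are exactly those of `L`, and the covered subtrees are
pairwise disjoint. -/
def ExAnc (L W : Set V) : Prop :=
  (⋃ w ∈ W, T.cov w) = L ∧ W.Pairwise (fun a b => Disjoint (T.cov a) (T.cov b))

/-- `W` is a minimal exclusive ancestor set of `L`: it is an exclusive ancestor
set, of minimum cardinality, and each of its elements is as shallow as possible
(no element can be replaced by a strict ancestor still covering only leaves of `L`). -/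
def MinExAnc (L W : Set V) : Prop :=
  T.ExAnc L W ∧ (∀ W', T.ExAnc L W' → W.ncard ≤ W'.ncard) ∧
  ∀ w ∈ W, ∀ v, T.Desc w v → v ≠ w → ¬ T.cov v ⊆ L

end RTree

namespace RTree
variable {V : Type} (T : RTree V)

open scoped Classical

theorem desc_refl (v : V) : T.Desc v v := ⟨0, rfl⟩

theorem desc_trans {u v w : V} (h1 : T.Desc u v) (h2 : T.Desc v w) : T.Desc u w := by
  obtain ⟨j, hj⟩ := h1; obtain ⟨k, hk⟩ := h2
  exact ⟨k + j, by rw [Function.iterate_add_apply, hj, hk]⟩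

theorem cov_mono {u v : V} (h : T.Desc u v) : T.cov u ⊆ T.cov v :=
  fun l hl => ⟨hl.1, T.desc_trans hl.2 h⟩

theorem eq_root_of_parent_eq {v : V} (h : T.parent v = v) : v = T.root := by
  obtain ⟨k, hk⟩ := T.reaches_root v
  rwa [Function.iterate_fixed h] at hk

theorem desc_leaf_eq {l : V} (hl : T.IsLeaf l) :
    ∀ k (u : V), T.parent^[k] u = l → u = l := by
  intro k
  induction k with
  | zero => intro u h; exact h
  | succ n ih =>
    intro u h
    rw [Function.iterate_succ_apply'] at h
    exact ih u (hl _ h)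

noncomputable def depth (v : V) : ℕ := Nat.find (T.reaches_root v)

theorem depth_spec (v : V) : T.parent^[T.depth v] v = T.root := Nat.find_spec (T.reaches_root v)

theorem depth_min {v : V} {k : ℕ} (h : k < T.depth v) : T.parent^[k] v ≠ T.root :=
  Nat.find_min _ h

theorem iterate_ne {v : V} {i j : ℕ} (hij : i < j) (hj : j ≤ T.depth v) :
    T.parent^[i] v ≠ T.parent^[j] v := by
  intro h
  have hroot : T.parent^[(T.depth v - j) + i] v = T.root := by
    rw [Function.iterate_add_apply, h, ← Function.iterate_add_apply,
      Nat.sub_add_cancel hj]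
    exact T.depth_spec v
  exact T.depth_min (by omega) hroot

theorem depth_lt_card [Fintype V] (v : V) : T.depth v < Fintype.card V := by
  have hinj : Function.Injective (fun i : Fin (T.depth v + 1) => T.parent^[i.1] v) := by
    intro i j hij
    rcases lt_trichotomy i.1 j.1 with h | h | h
    · exact absurd hij (T.iterate_ne h (by omega))
    · exact Fin.ext h
    · exact absurd hij.symm (T.iterate_ne h (by omega))
  have := Fintype.card_le_of_injective _ hinj
  simpa using this

theorem depth_parent_lt {u : V} (hu : u ≠ T.root) : T.depth (T.parent u) < T.depth u := by
  have h1 : T.depth u ≠ 0 := by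
    intro h
    exact hu (by have := T.depth_spec u; rwa [h] at this)
  obtain ⟨m, hm⟩ := Nat.exists_eq_succ_of_ne_zero h1
  have h2 : T.parent^[m] (T.parent u) = T.root := by
    have := T.depth_spec u
    rwa [hm, Function.iterate_succ_apply] at this
  have h3 : T.depth (T.parent u) ≤ m := Nat.find_le h2
  omega

theorem exists_leaf_desc [Fintype V] (v : V) : ∃ l, T.IsLeaf l ∧ T.Desc l v := by
  have H : ∀ n (v : V), Fintype.card V - T.depth v ≤ n → ∃ l, T.IsLeaf l ∧ T.Desc l v := by
    intro n
    induction n with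
    | zero => intro v hv; have := T.depth_lt_card v; omega
    | succ n ih =>
      intro v hv
      by_cases hleaf : T.IsLeaf v
      · exact ⟨v, hleaf, T.desc_refl v⟩
      · simp only [IsLeaf, not_forall] at hleaf
        obtain ⟨u, hpu, hne⟩ := hleaf
        have huroot : u ≠ T.root := by
          intro h
          subst h
          apply hne
          rw [← hpu, T.parent_root]
        have hdu : T.depth v < T.depth u := hpu ▸ T.depth_parent_lt huroot
        have hcu := T.depth_lt_card u
        obtain ⟨l, hl, hld⟩ := ih u (by omega)
        exact ⟨l, hl, T.desc_trans hld ⟨1, by simpa using hpu⟩⟩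
  exact H (Fintype.card V) v (by omega)

theorem desc_total {u v l : V} (h1 : T.Desc l u) (h2 : T.Desc l v) :
    T.Desc u v ∨ T.Desc v u := by
  obtain ⟨j, hj⟩ := h1; obtain ⟨k, hk⟩ := h2
  rcases le_total j k with h | h
  · left
    exact ⟨k - j, by rw [← hj, ← Function.iterate_add_apply, Nat.sub_add_cancel h]; exact hk⟩
  · right
    exact ⟨j - k, by rw [← hk, ← Function.iterate_add_apply, Nat.sub_add_cancel h]; exact hj⟩

theorem desc_parent_of_ne {a b : V} (h : T.Desc a b) (hne : a ≠ b) :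
    T.Desc (T.parent a) b := by
  obtain ⟨k, hk⟩ := h
  cases k with
  | zero => exact absurd hk hne
  | succ m => exact ⟨m, by rw [← Function.iterate_succ_apply]; exact hk⟩

end RTree

/-- for a rooted tree `T` and a nonempty proper subset `L` of its
leaves, there is a unique minimal exclusive ancestor set `W` of `L`, and it
consists exactly of the vertices `v` such that every leaf below `v` is in `L`
but some leaf below `parent v` is not in `L`. -/
theorem exclusive_ancestor_set_unique {V : Type} [Fintype V] (T : RTree V)
    (L : Set V) (hL : L ⊆ T.leaves) (hne : L.Nonempty) (hproper : L ≠ T.leaves) :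
    (∃! W : Set V, T.MinExAnc L W) ∧
    ∀ W : Set V, T.MinExAnc L W →
      W = {v : V | T.cov v ⊆ L ∧ ¬ T.cov (T.parent v) ⊆ L} := by
  classical
  set W₀ : Set V := {v : V | T.cov v ⊆ L ∧ ¬ T.cov (T.parent v) ⊆ L} with hW₀def
  have hcovroot : T.cov T.root = T.leaves := by
    ext l
    exact ⟨fun hl => hl.1, fun hl => ⟨hl, T.reaches_root l⟩⟩
  have hnotroot : ¬ T.cov T.root ⊆ L := by
    rw [hcovroot]
    intro h
    exact hproper (Set.Subset.antisymm hL h)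
  have hmem : ∀ l ∈ L, ∃ w ∈ W₀, l ∈ T.cov w := by
    intro l hl
    have hleaf : T.IsLeaf l := hL hl
    have hcovl : T.cov l ⊆ L := by
      intro x hx
      obtain ⟨k, hk⟩ := hx.2
      rw [T.desc_leaf_eq hleaf k x hk]; exact hl
    have hex : ∃ k, ¬ T.cov (T.parent^[k] l) ⊆ L :=
      ⟨T.depth l, by rw [T.depth_spec l]; exact hnotroot⟩
    have hk₀ := Nat.find_spec hex
    have hk₀pos : Nat.find hex ≠ 0 := by
      intro h
      rw [h] at hk₀
      exact hk₀ (by simpa using hcovl)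
    obtain ⟨m, hm⟩ := Nat.exists_eq_succ_of_ne_zero hk₀pos
    refine ⟨T.parent^[m] l, ⟨?_, ?_⟩, hleaf, ⟨m, rfl⟩⟩
    · have := Nat.find_min hex (show m < Nat.find hex by omega)
      exact not_not.mp this
    · rw [← Function.iterate_succ_apply' T.parent m l]
      exact hm ▸ hk₀
  have hexanc : T.ExAnc L W₀ := by
    constructor
    · ext l
      simp only [Set.mem_iUnion]
      constructor
      · rintro ⟨w, hw, hlw⟩
        exact hw.1 hlw
      · intro hl
        obtain ⟨w, hw, hlw⟩ := hmem l hl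
        exact ⟨w, hw, hlw⟩
    · intro a ha b hb hab
      rw [Set.disjoint_left]
      intro l hla hlb
      rcases T.desc_total hla.2 hlb.2 with h | h
      · exact ha.2 ((T.cov_mono (T.desc_parent_of_ne h hab)).trans hb.1)
      · exact hb.2 ((T.cov_mono (T.desc_parent_of_ne h (Ne.symm hab))).trans ha.1)
  have hcard : ∀ W', T.ExAnc L W' → W₀.ncard ≤ W'.ncard := by
    intro W' hW'
    have key : ∀ w₀ : V, ∃ w', w₀ ∈ W₀ →
        w' ∈ W' ∧ T.cov w' ⊆ T.cov w₀ ∧ (T.cov w').Nonempty := by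
      intro w₀
      by_cases hw₀ : w₀ ∈ W₀
      · obtain ⟨l, hleaf, hdesc⟩ := T.exists_leaf_desc w₀
        have hlL : l ∈ L := hw₀.1 ⟨hleaf, hdesc⟩
        have hlU : l ∈ ⋃ w ∈ W', T.cov w := hW'.1 ▸ hlL
        simp only [Set.mem_iUnion] at hlU
        obtain ⟨w', hw', hlw'⟩ := hlU
        refine ⟨w', fun _ => ⟨hw', ?_, ⟨l, hlw'⟩⟩⟩
        rcases T.desc_total hlw'.2 hdesc with h | h
        · exact T.cov_mono h
        · rcases eq_or_ne w₀ w' with rfl | hne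
          · exact subset_rfl
          · exfalso
            have hsub : T.cov w' ⊆ L := by
              rw [← hW'.1]
              exact Set.subset_biUnion_of_mem hw'
            exact hw₀.2 ((T.cov_mono (T.desc_parent_of_ne h hne)).trans hsub)
      · exact ⟨T.root, fun h => absurd h hw₀⟩
    choose g hg using key
    apply Set.ncard_le_ncard_of_injOn g
    · intro a ha
      exact (hg a ha).1
    · intro a ha b hb hgab
      by_contra hne
      have hdisj := hexanc.2 ha hb hne
      have h1 := hg a ha
      have h2 := hg b hb
      obtain ⟨x, hx⟩ := h1.2.2
      exact Set.disjoint_left.mp hdisj (h1.2.1 hx) (h2.2.1 (hgab ▸ hx))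
  have hshallow : ∀ w ∈ W₀, ∀ v, T.Desc w v → v ≠ w → ¬ T.cov v ⊆ L := by
    intro w hw v hdesc hvne hsub
    exact hw.2 ((T.cov_mono (T.desc_parent_of_ne hdesc (Ne.symm hvne))).trans hsub)
  have hmin : T.MinExAnc L W₀ := ⟨hexanc, hcard, hshallow⟩
  have huniq : ∀ W, T.MinExAnc L W → W = W₀ := by
    intro W hW
    have hsub : W ⊆ W₀ := by
      intro w hw
      have hcovw : T.cov w ⊆ L := by
        rw [← hW.1.1]
        exact Set.subset_biUnion_of_mem hw
      refine ⟨hcovw, ?_⟩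
      rcases eq_or_ne (T.parent w) w with h | h
      · have hwroot : w = T.root := T.eq_root_of_parent_eq h
        rw [h, hwroot]
        exact hnotroot
      · exact hW.2.2 w hw (T.parent w) ⟨1, by simp⟩ h
    exact Set.eq_of_subset_of_ncard_le hsub (hcard W hW.1) (Set.toFinite W₀)
  exact ⟨⟨W₀, hmin, fun W hW => huniq W hW⟩, fun W hW => huniq W hW⟩
end

section
/- A segment [x..y] of an MSA[1..m][1..n] is semi-repeat-free if and only if every row substring MSA[i][x..y] for 1 ≤ i ≤ m is semi-repeat-free. Moreover, if MSA[i][x..y] is semi-repeat-free then MSA[i][x..y'] is semi-repeat-free for all y < y' ≤ n; hence f(x) = max over i of f^i(x), where f^i(x) is the smallest y > x such that MSA[i][x+1..y] is semi-repeat-free and f(x) is the smallest y > x such that segment [x+1..y] is semi-repeat-free. -/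
lemma filterMap_le_prefix {α : Type} {n : ℕ} (f : Fin n → Option α) (x y y' : ℕ) (h : y ≤ y') :
    ∀ l : List (Fin n), l.Pairwise (fun a b : Fin n => (a : ℕ) ≤ (b : ℕ)) →
      (l.filterMap (fun (d : Fin n) => if x ≤ (d : ℕ) ∧ (d : ℕ) ≤ y then f d else none)) <+:
      (l.filterMap (fun (d : Fin n) => if x ≤ (d : ℕ) ∧ (d : ℕ) ≤ y' then f d else none))
  | [], _ => List.nil_prefix
  | c :: l, hp => by
    rcases List.pairwise_cons.mp hp with ⟨hc, hl⟩
    simp only [List.filterMap_cons]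
    rcases Nat.lt_or_ge y (c : ℕ) with hcy | hcy
    · have h1 : (if x ≤ (c : ℕ) ∧ (c : ℕ) ≤ y then f c else none) = none := by
        rw [if_neg]; rintro ⟨_, h2⟩; omega
      have h2 : (l.filterMap (fun (d : Fin n) => if x ≤ (d : ℕ) ∧ (d : ℕ) ≤ y then f d else none)) = [] := by
        rw [List.filterMap_eq_nil_iff]
        intro a ha
        rw [if_neg]; rintro ⟨_, h3⟩; have := hc a ha; omega
      rw [h1, h2]
      exact List.nil_prefix
    · have heq : (if x ≤ (c : ℕ) ∧ (c : ℕ) ≤ y then f c else none)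
          = (if x ≤ (c : ℕ) ∧ (c : ℕ) ≤ y' then f c else none) := by
        by_cases hx : x ≤ (c : ℕ)
        · rw [if_pos ⟨hx, hcy⟩, if_pos ⟨hx, by omega⟩]
        · rw [if_neg (by tauto), if_neg (by tauto)]
      rw [← heq]
      cases hfc : (if x ≤ (c : ℕ) ∧ (c : ℕ) ≤ y then f c else none) with
      | none => exact filterMap_le_prefix f x y y' h l hl
      | some a => exact (List.prefix_cons_inj a).mpr (filterMap_le_prefix f x y y' h l hl)

lemma spell_prefix_spell {α : Type} {m n : ℕ} (M : Fin m → Fin n → Option α) (i : Fin m)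
    (x y y' : ℕ) (h : y ≤ y') : spell M i x y <+: spell M i x y' := by
  unfold spell
  exact filterMap_le_prefix (M i) x y y' h (List.finRange n)
    ((List.pairwise_lt_finRange n).imp (fun hab => le_of_lt hab))

lemma rowSRF_mono {α : Type} {m n : ℕ} (M : Fin m → Fin n → Option α) (x : ℕ)
    (i : Fin m) (y y' : ℕ) (h : RowSRF M x y i) (hyy : y ≤ y') : RowSRF M x y' i := by
  intro i' p hp
  exact h i' p ((spell_prefix_spell M i x y y' hyy).trans hp)

theorem segment_rowwise_srf_aux {α : Type} {m n : ℕ} (M : Fin m → Fin n → Option α)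
    (x : ℕ) (hm : 0 < m)
    (hex : ∀ i : Fin m, ∃ y, x ≤ y ∧ RowSRF M x y i) :
    (∀ y, SegSRF M x y ↔ ∀ i : Fin m, RowSRF M x y i) ∧
    (∀ (i : Fin m) (y y' : ℕ), RowSRF M x y i → y ≤ y' → RowSRF M x y' i) ∧
    sInf {y | x ≤ y ∧ SegSRF M x y} =
      Finset.univ.sup (fun i : Fin m => sInf {y | x ≤ y ∧ RowSRF M x y i}) := by
  have hiff : ∀ y, SegSRF M x y ↔ ∀ i : Fin m, RowSRF M x y i := by
    intro y
    constructor
    · intro h i i' p hp; exact h i i' p hp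
    · intro h i i' p hp; exact h i i' p hp
  refine ⟨hiff, fun i y y' h hyy => rowSRF_mono M x i y y' h hyy, ?_⟩
  set Y := Finset.univ.sup (fun i : Fin m => sInf {y | x ≤ y ∧ RowSRF M x y i}) with hY
  have hmemi : ∀ i : Fin m, sInf {y | x ≤ y ∧ RowSRF M x y i} ∈ {y | x ≤ y ∧ RowSRF M x y i} := by
    intro i
    exact Nat.sInf_mem (by rcases hex i with ⟨y, hy⟩; exact ⟨y, hy⟩)
  have hYmem : Y ∈ {y | x ≤ y ∧ SegSRF M x y} := by
    obtain ⟨i0⟩ : Nonempty (Fin m) := ⟨⟨0, hm⟩⟩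
    have hle : ∀ i : Fin m, sInf {y | x ≤ y ∧ RowSRF M x y i} ≤ Y :=
      fun i => Finset.le_sup (f := fun i : Fin m => sInf {y | x ≤ y ∧ RowSRF M x y i})
        (Finset.mem_univ i)
    refine ⟨le_trans (hmemi i0).1 (hle i0), ?_⟩
    rw [hiff]
    intro i
    exact rowSRF_mono M x i _ Y (hmemi i).2 (hle i)
  apply le_antisymm
  · exact Nat.sInf_le hYmem
  · apply Finset.sup_le
    intro i _
    apply Nat.sInf_le
    have hmem := Nat.sInf_mem (⟨Y, hYmem⟩ : {y | x ≤ y ∧ SegSRF M x y}.Nonempty)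
    exact ⟨hmem.1, ((hiff _).mp hmem.2) i⟩


/-- a segment is semi-repeat-free iff every row substring in it is
semi-repeat-free; row semi-repeat-freeness is closed under right extension; and
hence the minimal right extension `f(x)` of the whole MSA prefix is the maximum
over rows of the row-wise minimal right extensions `f^i(x)` (columns 0-indexed:
`f(x)` is the least `y ≥ x` with `[x..y]` semi-repeat-free). -/
theorem segment_rowwise_srf {α : Type} {m n : ℕ} (M : Fin m → Fin n → Option α)
    (x : ℕ) (hm : 0 < m)
    (hex : ∀ i : Fin m, ∃ y, x ≤ y ∧ RowSRF M x y i) :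
    (∀ y, SegSRF M x y ↔ ∀ i : Fin m, RowSRF M x y i) ∧
    (∀ (i : Fin m) (y y' : ℕ), RowSRF M x y i → y ≤ y' → RowSRF M x y' i) ∧
    sInf {y | x ≤ y ∧ SegSRF M x y} =
      Finset.univ.sup (fun i : Fin m => sInf {y | x ≤ y ∧ RowSRF M x y i}) := by
  exact segment_rowwise_srf_aux M x hm hex
end

section
/- For a semi-repeat-free elastic founder graph G = (V,E,ℓ) and any edge (v,w) ∈ E, the string ℓ(v)ℓ(w)·0 occurs exactly once in the text D'_F; hence its lexicographic range in the suffix array of D'_F is a singleton. -/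
/-- The text `D'_F`: the sentinel `0` (here `none`), followed by `ℓ(v)0` for each
sink node `v` and `ℓ(v)ℓ(w)0` for each edge `(v,w)`. -/
noncomputable def DF {α : Type} (G : EFG α) (sinks : Finset G.V)
    (edges : Finset (G.V × G.V)) : List (Option α) :=
  [none] ++
    (sinks.toList.map (fun v => (G.label v).map some ++ [none])).flatten ++
    (edges.toList.map (fun e =>
      ((G.label e.1 ++ G.label e.2).map some) ++ [none])).flatten

-- helper: suffix through map some
lemma suffix_of_map_some_suffix {α : Type} {a b : List α}
    (h : a.map some <:+ b.map some) : a <:+ b := by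
  obtain ⟨c, hc⟩ := h
  have hd : (b.map some).drop c.length = a.map some := by
    rw [← hc, List.drop_left]
  rw [← List.map_drop] at hd
  have h2 : b.drop c.length = a :=
    List.map_injective_iff.mpr (Option.some_injective α) hd
  exact h2 ▸ List.drop_suffix _ _

-- the occurrence-characterization lemma
lemma occ_aux {β : Type} (d : β) (t : List β) (ht : t ≠ []) (htd : d ∉ t) :
    ∀ (parts : List (List β)), (∀ u ∈ parts, d ∉ u) → ∀ p : ℕ,
    ((t ++ [d]) <+: ((parts.map (· ++ [d])).flatten).drop p ↔
      ∃ k, ∃ hk : k < parts.length, t <:+ parts.get ⟨k, hk⟩ ∧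
        p + t.length =
          (((parts.take k).map (· ++ [d])).flatten).length + (parts.get ⟨k, hk⟩).length) := by
  intro parts
  induction parts with
  | nil =>
      intro _ p
      simp [List.prefix_nil, ht]
  | cons u rest ih =>
      intro hmem p
      have hu : d ∉ u := hmem u List.mem_cons_self
      have hrest : ∀ x ∈ rest, d ∉ x := fun x hx => hmem x (List.mem_cons_of_mem _ hx)
      have htext : (((u :: rest).map (· ++ [d])).flatten)
          = (u ++ [d]) ++ ((rest.map (· ++ [d])).flatten) := by simp
      rcases le_or_gt p u.length with hp | hp
      · -- p within the first part
        have hdrop : (((u :: rest).map (· ++ [d])).flatten).drop p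
            = (u.drop p ++ [d]) ++ ((rest.map (· ++ [d])).flatten) := by
          rw [htext, List.append_assoc, List.drop_append_of_le_length hp,
            List.append_assoc]
        rw [hdrop]
        constructor
        · intro h
          -- show k = 0 works
          have hsuff_len : ∀ (hcase : True), t <:+ u ∧ p + t.length = u.length := by
            intro _
            set u' := u.drop p with hu'
            have hu'len : u'.length = u.length - p := by simp [hu']
            have hu'pre : u' <+: u' ++ ([d] ++ (rest.map (· ++ [d])).flatten) :=
              List.prefix_append _ _
            have htpre : t <+: (u' ++ [d]) ++ (rest.map (· ++ [d])).flatten :=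
              (List.prefix_append t [d]).trans h
            rcases Nat.lt_trichotomy t.length u'.length with hlt | heq | hgt
            · -- t ++ [d] fits inside u' : d ∈ u, contradiction
              have h1 : t ++ [d] <+: u' := by
                apply List.prefix_of_prefix_length_le (by rwa [List.append_assoc] at h) hu'pre
                simp; omega
              exact absurd (List.mem_of_mem_drop (h1.subset (by simp))) hu
            · -- exact fit
              have h1 : u' <+: t := by
                apply List.prefix_of_prefix_length_le
                  (by rw [List.append_assoc]; exact hu'pre) htpre (le_of_eq heq.symm)
              have h2 : u' = t := h1.eq_of_length heq.symm
              constructor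
              · exact h2 ▸ List.drop_suffix _ _
              · omega
            · -- u' ++ [d] is a prefix of t : d ∈ t, contradiction
              have h1 : u' ++ [d] <+: t := by
                apply List.prefix_of_prefix_length_le (List.prefix_append _ _) htpre
                simp; omega
              exact absurd (h1.subset (by simp)) htd
          obtain ⟨hsuf, hlen⟩ := hsuff_len trivial
          refine ⟨0, Nat.succ_pos _, hsuf, ?_⟩
          have h1 : (((u :: rest).take 0).map (· ++ [d])).flatten.length = 0 := rfl
          have h0 : (((u :: rest).get ⟨0, Nat.succ_pos _⟩)).length = u.length := rfl
          omega
        · rintro ⟨k, hk, hsuf, hlen⟩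
          match k with
          | 0 =>
              have hsuf' : t <:+ u := hsuf
              have hlen' : p + t.length = u.length := by
                have h1 : (((u :: rest).take 0).map (· ++ [d])).flatten.length = 0 := rfl
                have h0 : (((u :: rest).get ⟨0, hk⟩)).length = u.length := rfl
                omega
              -- u.drop p = t
              obtain ⟨c, hc⟩ := hsuf'
              have hcl : c.length = p := by
                have := congrArg List.length hc
                simp at this; omega
              have : u.drop p = t := by
                rw [← hc, ← hcl, List.drop_left]
              rw [this]
              exact List.prefix_append _ _
          | (k' + 1) =>
              exfalso
              have hsl : t.length ≤ ((u :: rest).get ⟨k' + 1, hk⟩).length :=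
                hsuf.length_le
              rw [List.take_succ_cons, List.map_cons, List.flatten_cons,
                List.length_append] at hlen
              have hud : (u ++ [d]).length = u.length + 1 := by simp
              omega
      · -- p beyond the first part
        have hdrop : (((u :: rest).map (· ++ [d])).flatten).drop p
            = ((rest.map (· ++ [d])).flatten).drop (p - (u.length + 1)) := by
          rw [htext]
          have hpe : p = (u ++ [d]).length + (p - (u.length + 1)) := by simp; omega
          conv_lhs => rw [hpe]
          rw [List.drop_length_add_append]
        rw [hdrop, ih hrest (p - (u.length + 1))]
        constructor
        · rintro ⟨k, hk, hsuf, hlen⟩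
          refine ⟨k + 1, Nat.succ_lt_succ hk, hsuf, ?_⟩
          rw [List.take_succ_cons, List.map_cons, List.flatten_cons,
            List.length_append]
          have hud : (u ++ [d]).length = u.length + 1 := by simp
          show p + t.length = (u ++ [d]).length
            + ((rest.take k).map (· ++ [d])).flatten.length + (rest.get ⟨k, hk⟩).length
          omega
        · rintro ⟨k, hk, hsuf, hlen⟩
          match k with
          | 0 =>
              exfalso
              have hlen' : p + t.length = u.length := by
                have h1 : (((u :: rest).take 0).map (· ++ [d])).flatten.length = 0 := rfl
                have h0 : (((u :: rest).get ⟨0, hk⟩)).length = u.length := rfl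
                omega
              omega
          | (k' + 1) =>
              have hk' : k' < rest.length := by simpa using hk
              refine ⟨k', hk', hsuf, ?_⟩
              rw [List.take_succ_cons, List.map_cons, List.flatten_cons,
                List.length_append] at hlen
              have hud : (u ++ [d]).length = u.length + 1 := by simp
              have : ((u :: rest).get ⟨k' + 1, hk⟩) = rest.get ⟨k', hk'⟩ := rfl
              rw [this] at hlen
              omega
lemma srf_no_single {α : Type} (G : EFG α) (hsrf : G.SemiRepeatFree) (v w u : G.V) :
    ¬ (G.label v ++ G.label w <:+ G.label u) := by
  intro h
  obtain ⟨c, hc⟩ := h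
  have hpath : G.IsPath [u] := ⟨by simp, List.isChain_singleton u⟩
  have hPL : G.pathLabel [u] = G.label u := by simp [EFG.pathLabel]
  have h1 : G.label v <+: (G.pathLabel [u]).drop c.length := by
    rw [hPL, ← hc, List.drop_left]
    exact List.prefix_append _ _
  obtain ⟨j, hj, hst, -⟩ := hsrf v [u] hpath c.length h1
  have hj0 : j = 0 := by simpa using hj
  subst hj0
  have hc0 : c.length = 0 := by simpa [EFG.startPos, EFG.pathLabel] using hst
  have hcnil : c = [] := List.length_eq_zero_iff.mp hc0
  subst hcnil
  simp only [List.nil_append] at hc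
  have h2 : G.label w <+: (G.pathLabel [u]).drop (G.label v).length := by
    rw [hPL, ← hc, List.drop_left]
  obtain ⟨j', hj', hst', -⟩ := hsrf w [u] hpath _ h2
  have hj'0 : j' = 0 := by simpa using hj'
  subst hj'0
  have hlen0 : (G.label v).length = 0 := by
    simpa [EFG.startPos, EFG.pathLabel] using hst'
  exact G.label_ne v (List.length_eq_zero_iff.mp hlen0)

lemma srf_edge {α : Type} (G : EFG α) (hsrf : G.SemiRepeatFree) (v w u1 u2 : G.V)
    (hu : G.E u1 u2) (h : G.label v ++ G.label w <:+ G.label u1 ++ G.label u2) :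
    u1 = v ∧ u2 = w := by
  obtain ⟨c, hc⟩ := h
  have hpath : G.IsPath [u1, u2] := ⟨by simp, List.isChain_pair.mpr hu⟩
  have hPL : G.pathLabel [u1, u2] = G.label u1 ++ G.label u2 := by
    simp [EFG.pathLabel]
  have hvne : (G.label v).length ≠ 0 := fun h0 =>
    G.label_ne v (List.length_eq_zero_iff.mp h0)
  have h1 : G.label v <+: (G.pathLabel [u1, u2]).drop c.length := by
    rw [hPL, ← hc, List.drop_left]
    exact List.prefix_append _ _
  obtain ⟨j, hj, hst, hblk⟩ := hsrf v [u1, u2] hpath c.length h1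
  match j, hj, hst, hblk with
  | 1, hj, hst, hblk =>
      exfalso
      have hc1 : c.length = (G.label u1).length := by
        simpa [EFG.startPos, EFG.pathLabel] using hst
      obtain ⟨e1, e2⟩ := List.append_inj hc hc1
      have h2 : G.label w <+:
          (G.pathLabel [u1, u2]).drop ((G.label u1).length + (G.label v).length) := by
        rw [hPL, List.drop_length_add_append, ← e2, List.drop_left]
      obtain ⟨j', hj', hst', -⟩ := hsrf w [u1, u2] hpath _ h2
      match j', hj', hst' with
      | 0, _, hst' =>
          have : (G.label u1).length + (G.label v).length = 0 := by
            simpa [EFG.startPos, EFG.pathLabel] using hst'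
          exact hvne (by omega)
      | 1, _, hst' =>
          have : (G.label u1).length + (G.label v).length = (G.label u1).length := by
            simpa [EFG.startPos, EFG.pathLabel] using hst'
          exact hvne (by omega)
      | (n + 2), hj', _ => exact absurd hj' (by simp)
  | 0, hj, hst, hblk =>
      have hc0 : c.length = 0 := by simpa [EFG.startPos, EFG.pathLabel] using hst
      have hcnil : c = [] := List.length_eq_zero_iff.mp hc0
      subst hcnil
      simp only [List.nil_append] at hc
      have hblk1 : G.blk u1 = G.blk v := hblk
      have h2 : G.label w <+: (G.pathLabel [u1, u2]).drop (G.label v).length := by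
        rw [hPL, ← hc, List.drop_left]
      obtain ⟨j', hj', hst', hblk'⟩ := hsrf w [u1, u2] hpath _ h2
      match j', hj', hst', hblk' with
      | 0, _, hst', _ =>
          exfalso
          have : (G.label v).length = 0 := by
            simpa [EFG.startPos, EFG.pathLabel] using hst'
          exact hvne this
      | 1, _, hst', hblk' =>
          have hlen1 : (G.label v).length = (G.label u1).length := by
            simpa [EFG.startPos, EFG.pathLabel] using hst'
          obtain ⟨e1, e2⟩ := List.append_inj hc hlen1
          have hblk2 : G.blk u2 = G.blk w := hblk'
          exact ⟨G.label_inj u1 v hblk1 e1.symm, G.label_inj u2 w hblk2 e2.symm⟩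
      | (n + 2), hj', _, _ => exact absurd hj' (by simp)
/-- in a semi-repeat-free EFG, for any edge `(v,w)` the string
`ℓ(v)ℓ(w)·0` occurs exactly once in `D'_F`; hence its lexicographic range in the
suffix array of `D'_F` is a singleton. -/
theorem edge_label_occurs_once {α : Type} (G : EFG α)
    (hsrf : G.SemiRepeatFree)
    (sinks : Finset G.V) (hsinks : ∀ v : G.V, v ∈ sinks ↔ ∀ w, ¬ G.E v w)
    (edges : Finset (G.V × G.V)) (hedges : ∀ e : G.V × G.V, e ∈ edges ↔ G.E e.1 e.2)
    (v w : G.V) (hvw : G.E v w) :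
    {p : ℕ | (G.label v ++ G.label w).map some ++ [none] <+:
      (DF G sinks edges).drop p}.ncard = 1 := by
  classical
  set t : List (Option α) := (G.label v ++ G.label w).map some with ht_def
  have htne : t ≠ [] := by
    simp [ht_def, G.label_ne v]
  have htnone : (none : Option α) ∉ t := by simp [ht_def]
  set A : List (List (Option α)) :=
    sinks.toList.map (fun u => (G.label u).map some) with hA
  set B : List (List (Option α)) :=
    edges.toList.map (fun e => (G.label e.1 ++ G.label e.2).map some) with hB
  set parts := A ++ B with hparts
  have hmem : ∀ x ∈ parts, (none : Option α) ∉ x := by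
    intro x hx
    rcases List.mem_append.mp hx with hx | hx <;>
    · obtain ⟨y, _, rfl⟩ := List.mem_map.mp hx
      simp
  have hD : DF G sinks edges
      = none :: ((parts.map (· ++ [(none : Option α)])).flatten) := by
    simp [DF, hparts, hA, hB, List.map_map, Function.comp_def]
  have hocc : ∀ p : ℕ, (t ++ [none] <+: (DF G sinks edges).drop p) ↔
      ∃ q, p = q + 1 ∧ ∃ k, ∃ hk : k < parts.length, t <:+ parts.get ⟨k, hk⟩ ∧
        q + t.length = (((parts.take k).map (· ++ [(none : Option α)])).flatten).length
          + (parts.get ⟨k, hk⟩).length := by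
    intro p
    match p with
    | 0 =>
        rw [hD]
        simp only [List.drop_zero]
        constructor
        · intro hpre
          exfalso
          obtain ⟨a, la, hla⟩ := List.exists_cons_of_ne_nil htne
          obtain ⟨r, hr⟩ := hpre
          rw [hla] at hr
          simp only [List.cons_append, List.cons.injEq] at hr
          exact htnone (by rw [hla, hr.1]; exact List.mem_cons_self)
        · rintro ⟨q, hq, -⟩
          exact absurd hq (by omega)
    | (q + 1) =>
        rw [hD]
        simp only [List.drop_succ_cons]
        rw [occ_aux (none : Option α) t htne htnone parts hmem q]
        constructor
        · intro h
          exact ⟨q, rfl, h⟩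
        · rintro ⟨q', hq', h⟩
          have : q' = q := by omega
          subst this
          exact h
  have hvw_mem : (v, w) ∈ edges.toList := by
    rw [Finset.mem_toList]; exact (hedges (v, w)).mpr hvw
  obtain ⟨j₀, hj₀⟩ := List.mem_iff_get.mp hvw_mem
  have hk₀ : A.length + (j₀ : ℕ) < parts.length := by
    have : (j₀ : ℕ) < B.length := by simpa [hB] using j₀.isLt
    simp only [hparts, List.length_append]
    omega
  have of_q : ∀ (L : List (List (Option α))) (n : ℕ) (hn : n < L.length)
      (x : List (Option α)), L[n]? = some x → L.get ⟨n, hn⟩ = x := by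
    intro L n hn x hx
    rw [List.get_eq_getElem]
    rw [List.getElem?_eq_getElem hn] at hx
    exact Option.some.inj hx
  have hj₀' : edges.toList[(j₀ : ℕ)] = (v, w) := by
    simpa [List.get_eq_getElem] using hj₀
  have hget₀ : parts.get ⟨A.length + (j₀ : ℕ), hk₀⟩ = t := by
    apply of_q
    rw [hparts, List.getElem?_append_right (by omega), Nat.add_sub_cancel_left, hB,
      List.getElem?_map, List.getElem?_eq_getElem j₀.isLt, hj₀']
    rfl
  have huniq : ∀ k, ∀ hk : k < parts.length, t <:+ parts.get ⟨k, hk⟩ →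
      k = A.length + (j₀ : ℕ) := by
    intro k hk hsuf
    rcases lt_or_ge k A.length with hlt | hge
    · exfalso
      have hkA : k < sinks.toList.length := by simpa [hA] using hlt
      have h1 : parts.get ⟨k, hk⟩ = (G.label sinks.toList[k]).map some := by
        apply of_q
        rw [hparts, List.getElem?_append_left hlt, hA, List.getElem?_map,
          List.getElem?_eq_getElem hkA]
        rfl
      rw [h1] at hsuf
      exact srf_no_single G hsrf v w _ (suffix_of_map_some_suffix hsuf)
    · have hjE : k - A.length < edges.toList.length := by
        have := hk
        simp only [hparts, List.length_append, hB, List.length_map] at this ⊢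
        omega
      have h1 : parts.get ⟨k, hk⟩
          = (G.label (edges.toList[k - A.length]'hjE).1
            ++ G.label (edges.toList[k - A.length]'hjE).2).map some := by
        apply of_q
        rw [hparts, List.getElem?_append_right hge, hB, List.getElem?_map,
          List.getElem?_eq_getElem hjE]
        rfl
      rw [h1] at hsuf
      have heE : G.E (edges.toList[k - A.length]'hjE).1 (edges.toList[k - A.length]'hjE).2 := by
        rw [← hedges (edges.toList[k - A.length]'hjE), ← Finset.mem_toList]
        exact List.getElem_mem hjE
      obtain ⟨hv', hw'⟩ := srf_edge G hsrf v w _ _ heE (suffix_of_map_some_suffix hsuf)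
      have he : edges.toList[k - A.length]'hjE = (v, w) := Prod.ext hv' hw'
      have hgets : edges.toList.get ⟨k - A.length, hjE⟩ = edges.toList.get j₀ := by
        rw [hj₀, List.get_eq_getElem]; exact he
      have h2 := (edges.nodup_toList.get_inj_iff).mp hgets
      have h3 : k - A.length = (j₀ : ℕ) := by simpa [Fin.ext_iff] using h2
      omega
  have hsing : {p : ℕ | t ++ [none] <+: (DF G sinks edges).drop p}
      = {(((parts.take (A.length + (j₀ : ℕ))).map
          (· ++ [(none : Option α)])).flatten).length + 1} := by
    ext p
    simp only [Set.mem_setOf_eq, Set.mem_singleton_iff]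
    rw [hocc p]
    constructor
    · rintro ⟨q, rfl, k, hk, hsuf, hlen⟩
      have hkk := huniq k hk hsuf
      subst hkk
      rw [hget₀] at hlen
      omega
    · rintro rfl
      refine ⟨_, rfl, A.length + (j₀ : ℕ), hk₀, ?_, ?_⟩
      · rw [hget₀]
      · rw [hget₀]
  rw [ht_def] at hsing
  rw [hsing]
  exact Set.ncard_singleton _
end
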